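/- arXiv:1012.4925 — 9 statements merged into one kernel-verified Lean document; each statement's English description precedes it below -/
import Mathlib

section
/- Let U ⊆ ℂ² be a connected open neighborhood of the origin and let F : U → ℂ² be analytic with F(0,0) = (0,0). Assume that the derivative DF(0,0) is diagonalizable with eigenvalues λ and μ (i.e., there exist linearly independent vectors v, w ∈ ℂ² with DF(0,0)v = λv and DF(0,0)w = μw) and that λμ ≠ 0. If F admits a meromorphic first integral H = P/Q on U, then there exists a pair of integers (p,q) ≠ (0,0) such that λ^p · μ^q = 1 (integer powers, possibly negative). -/
/-!
Restrict everything to the lines `t ↦ t • z` through the origin. If `P` and `Q` start with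
homogeneous parts `Pₘ` and `Qₙ`, comparing the coefficients of `t ^ (m + n)` on both sides of
`P (F (t • z)) * Q (t • z) = P (t • z) * Q (F (t • z))` shows that `Pₘ / Qₙ` is invariant under
`A = DF(0)`. In the eigenbasis `v, w` of `A`, dehomogenizing `Pₘ` and `Qₙ` turns this into an
identity between one-variable polynomials of degrees `I ≤ m` and `K ≤ n`; its leading
coefficients give `λ ^ I * μ ^ (m - I) = λ ^ K * μ ^ (n - K)`, so without resonances `m = n`
and `Pₘ = c • Qₙ`. But then `P - c • Q` starts in degree `> m`, and the same argument applied
to it and `Q` forces its degree to be `n = m`.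
-/

open Filter Topology Asymptotics Polynomial

section LeadingTerm

variable {𝕜 : Type*} [NontriviallyNormedField 𝕜]

def HasLeadingTerm (h : 𝕜 → 𝕜) (m : ℕ) (c : 𝕜) : Prop :=
  (fun t => h t - c * t ^ m) =o[𝓝 0] fun t => t ^ m

variable {h g : 𝕜 → 𝕜} {m n : ℕ} {c d : 𝕜}

theorem HasLeadingTerm.congr (hh : HasLeadingTerm h m c) (hg : h =ᶠ[𝓝 0] g) :
    HasLeadingTerm g m c :=
  hh.congr' (hg.mono fun t ht => by simp only [ht]) EventuallyEq.rfl

theorem HasLeadingTerm.isBigO (hh : HasLeadingTerm h m c) : h =O[𝓝 0] fun t => t ^ m :=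
  (IsLittleO.isBigO hh |>.add (isBigO_const_mul_self c _ _)).congr_left fun _ => sub_add_cancel _ _

theorem HasLeadingTerm.mul (hh : HasLeadingTerm h m c) (hg : HasLeadingTerm g n d) :
    HasLeadingTerm (fun t => h t * g t) (m + n) (c * d) := by
  refine ((IsLittleO.mul_isBigO hh hg.isBigO).add
    ((isBigO_const_mul_self c _ _).mul_isLittleO hg)).congr (fun t => by ring) fun t => ?_
  simp only [pow_add]

theorem HasLeadingTerm.unique (hc : HasLeadingTerm h m c) (hd : HasLeadingTerm h m d) :
    c = d := by
  by_contra hcd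
  have hdiff : (fun t => (d - c) * t ^ m) =o[𝓝 (0 : 𝕜)] fun t => t ^ m :=
    (hc.sub hd).congr_left fun t => by ring
  rw [isLittleO_const_mul_left_iff (sub_ne_zero.2 (Ne.symm hcd))] at hdiff
  have hne : ∃ᶠ t in 𝓝 (0 : 𝕜), t ^ m ≠ 0 :=
    (eventually_mem_nhdsWithin (s := {(0 : 𝕜)}ᶜ) (a := 0)).frequently.filter_mono
      nhdsWithin_le_nhds |>.mono fun t ht => pow_ne_zero m ht
  exact isLittleO_irrefl hne hdiff

end LeadingTerm

namespace ContinuousMultilinearMap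

variable {𝕜 : Type*} [NontriviallyNormedField 𝕜] {E : Type*} [NormedAddCommGroup E]
  [NormedSpace 𝕜 E] {n : ℕ} (f : ContinuousMultilinearMap 𝕜 (fun _ : Fin n => E) 𝕜)

theorem apply_const_smul (t : 𝕜) (z : E) :
    f (fun _ => t • z) = t ^ n * f (fun _ => z) := by
  simp [f.map_smul_univ (fun _ => t)]

theorem isLittleO_apply_curve_sub_apply_tangent {γ : 𝕜 → E} {v : E}
    (hγ : HasDerivAt γ v 0) (hγ0 : γ 0 = 0) :
    (fun t => f (fun _ => γ t) - f (fun _ => t • v)) =o[𝓝 0] fun t => t ^ n := by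
  cases n with
  | zero => simp [Subsingleton.elim (fun _ : Fin 0 => _) (fun _ : Fin 0 => (0 : E))]
  | succ k =>
    have hγO : γ =O[𝓝 0] fun t => t := by
      simpa [hγ0] using hγ.hasFDerivAt.isBigO_sub
    have hlin : (fun t => γ t - t • v) =o[𝓝 0] fun t => t := by
      simpa [hγ0] using hasDerivAt_iff_isLittleO_nhds_zero.1 hγ
    have hmax : (fun t => max ‖γ t‖ ‖t • v‖) =O[𝓝 0] fun t => t := by
      have hsum : (fun t => ‖γ t‖ + ‖v‖ * ‖t‖) =O[𝓝 0] fun t => t :=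
        hγO.norm_left.add ((isBigO_refl _ _).norm_left.const_mul_left ‖v‖)
      refine (isBigO_of_le _ fun t => ?_).trans hsum
      rw [norm_smul, Real.norm_of_nonneg (le_max_of_le_left (norm_nonneg _)),
        Real.norm_of_nonneg (by positivity)]
      exact max_le (by nlinarith [norm_nonneg t, norm_nonneg v]) (by nlinarith [norm_nonneg (γ t)])
    have hbound : (fun t => f (fun _ => γ t) - f (fun _ => t • v)) =O[𝓝 0]
        fun t => max ‖γ t‖ ‖t • v‖ ^ k * ‖γ t - t • v‖ := by
      refine IsBigO.of_bound (‖f‖ * (k + 1)) (Eventually.of_forall fun t => ?_)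
      have := f.norm_image_sub_le (fun _ => γ t) (fun _ => t • v)
      simp only [Fintype.card_fin, add_tsub_cancel_right, Nat.cast_add, Nat.cast_one,
        Pi.sub_def] at this
      rw [pi_norm_const, pi_norm_const, pi_norm_const] at this
      rwa [norm_mul, norm_pow, Real.norm_of_nonneg (le_max_of_le_left (norm_nonneg _)), norm_norm,
        ← mul_assoc]
    refine hbound.trans_isLittleO ?_
    simpa [pow_succ] using (hmax.pow k).mul_isLittleO hlin.norm_left

variable (v w : E)

theorem apply_diag_smul_add_smul (x y : 𝕜) :
    f (fun _ => x • v + y • w) = ∑ S : Finset (Fin n),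
      f (S.piecewise (fun _ => v) (fun _ => w)) * x ^ S.card * y ^ (n - S.card) := by
  rw [show (fun _ : Fin n => x • v + y • w) = (fun _ => x • v) + (fun _ => y • w) from rfl,
    f.map_add_univ]
  refine Finset.sum_congr rfl fun S _ => ?_
  have hsmul : S.piecewise (fun _ => x • v) (fun _ => y • w) =
      fun i => (if i ∈ S then x else y) • S.piecewise (fun _ => v) (fun _ => w) i := by
    funext i
    by_cases hi : i ∈ S <;> simp [hi]
  rw [hsmul, f.map_smul_univ, smul_eq_mul, Finset.prod_ite]
  simp [Finset.filter_not, Finset.card_sdiff]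
  ring

noncomputable def dehomogenize : 𝕜[X] :=
  ∑ S : Finset (Fin n), C (f (S.piecewise (fun _ => v) (fun _ => w))) * X ^ S.card

theorem eval_dehomogenize (x : 𝕜) : (f.dehomogenize v w).eval x = f (fun _ => x • v + w) := by
  simpa [dehomogenize, eval_finsetSum] using (f.apply_diag_smul_add_smul v w x 1).symm

theorem apply_diag_smul_add_smul_eq_sum_coeff (x y : 𝕜) :
    f (fun _ => x • v + y • w) = ∑ i ∈ Finset.range (n + 1),
      (f.dehomogenize v w).coeff i * x ^ i * y ^ (n - i) := by
  rw [apply_diag_smul_add_smul, ← Finset.sum_fiberwise_of_maps_to (g := Finset.card)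
    (t := Finset.range (n + 1)) fun S _ => Finset.mem_range_succ_iff.2 (card_finset_fin_le S)]
  refine Finset.sum_congr rfl fun i _ => ?_
  simp only [dehomogenize, finsetSum_coeff, coeff_C_mul_X_pow, Finset.sum_mul, Finset.sum_filter]
  refine Finset.sum_congr rfl fun S _ => ?_
  by_cases hS : S.card = i
  · simp [hS]
  · simp [hS, Ne.symm hS]

theorem apply_diag_eq_zero_of_dehomogenize_eq_zero (hvw : Submodule.span 𝕜 {v, w} = ⊤)
    (h : f.dehomogenize v w = 0) (z : E) : f (fun _ => z) = 0 := by
  obtain ⟨x, y, rfl⟩ := Submodule.mem_span_pair.1 (hvw ▸ Submodule.mem_top (x := z))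
  simp [apply_diag_smul_add_smul_eq_sum_coeff, h]

theorem dehomogenize_sub_smul (g : ContinuousMultilinearMap 𝕜 (fun _ : Fin n => E) 𝕜) (c : 𝕜) :
    (f - c • g).dehomogenize v w = f.dehomogenize v w - C c * g.dehomogenize v w := by
  simp [dehomogenize, Finset.mul_sum, ← Finset.sum_sub_distrib, sub_mul, mul_assoc]

theorem apply_diag_eq_mul_of_dehomogenize_eq (hvw : Submodule.span 𝕜 {v, w} = ⊤)
    {g : ContinuousMultilinearMap 𝕜 (fun _ : Fin n => E) 𝕜} {c : 𝕜}
    (h : f.dehomogenize v w = C c * g.dehomogenize v w) (z : E) :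
    f (fun _ => z) = c * g (fun _ => z) := by
  have := (f - c • g).apply_diag_eq_zero_of_dehomogenize_eq_zero v w hvw
    (by rw [dehomogenize_sub_smul, h, sub_self]) z
  simpa [sub_eq_zero] using this

end ContinuousMultilinearMap

namespace Polynomial

variable {K : Type*} [Field K] {Φ Ψ : K[X]} {ρ : K}

theorem mul_pow_natDegree_eq_of_comp_mul_eq (hΦ : Φ ≠ 0) (hΨ : Ψ ≠ 0) (hρ : ρ ≠ 0) {a b : K}
    (h : C a * Φ.comp (C ρ * X) * Ψ = C b * Φ * Ψ.comp (C ρ * X)) :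
    a * ρ ^ Φ.natDegree = b * ρ ^ Ψ.natDegree := by
  have hlc := congrArg leadingCoeff h
  simp only [leadingCoeff_mul, leadingCoeff_C, leadingCoeff_X, mul_one,
    leadingCoeff_comp (by simp [natDegree_C_mul_X _ hρ] : natDegree (C ρ * X) ≠ 0)] at hlc
  have hΦ' := leadingCoeff_ne_zero.2 hΦ
  have hΨ' := leadingCoeff_ne_zero.2 hΨ
  apply mul_right_cancel₀ (mul_ne_zero hΦ' hΨ')
  linear_combination hlc

theorem exists_eq_C_mul_of_comp_mul_eq (hΨ : Ψ ≠ 0) (hρ : Function.Injective (ρ ^ · : ℕ → K))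
    (h : Φ.comp (C ρ * X) * Ψ = Φ * Ψ.comp (C ρ * X)) : ∃ c, Φ = C c * Ψ := by
  have hρ0 : ρ ≠ 0 := by
    rintro rfl
    exact absurd (@hρ 1 2 (by simp)) (by norm_num)
  have hdeg : ∀ Φ' : K[X], Φ' ≠ 0 → Φ'.comp (C ρ * X) * Ψ = Φ' * Ψ.comp (C ρ * X) →
      Φ'.natDegree = Ψ.natDegree := fun Φ' hΦ' h' =>
    hρ (by simpa using
      mul_pow_natDegree_eq_of_comp_mul_eq hΦ' hΨ hρ0 (a := 1) (b := 1) (by simpa using h'))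
  have hcoeff : Φ.coeff Ψ.natDegree = Φ.leadingCoeff := by
    rcases eq_or_ne Φ 0 with rfl | hΦ
    · simp
    · rw [← hdeg Φ hΦ h, coeff_natDegree]
  -- otherwise `Φ - C c * Ψ` is a nonzero solution with vanishing coefficient in degree `deg Ψ`
  refine ⟨Φ.leadingCoeff / Ψ.leadingCoeff, ?_⟩
  by_contra hne
  set Φ' := Φ - C (Φ.leadingCoeff / Ψ.leadingCoeff) * Ψ
  have hΦ' : Φ' ≠ 0 := sub_ne_zero.2 hne
  have h' : Φ'.comp (C ρ * X) * Ψ = Φ' * Ψ.comp (C ρ * X) := by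
    simp only [Φ', sub_comp, mul_comp, C_comp]
    linear_combination h
  apply leadingCoeff_ne_zero.2 hΦ'
  rw [leadingCoeff, hdeg Φ' hΦ' h', coeff_sub, coeff_C_mul, hcoeff, coeff_natDegree,
    div_mul_cancel₀ _ (leadingCoeff_ne_zero.2 hΨ), sub_self]

end Polynomial

theorem eq_of_mul_div_pow_eq {K : Type*} [Field K] {lam mu : K} (hlam : lam ≠ 0) (hmu : mu ≠ 0)
    (hres : ∀ p q : ℤ, (p, q) ≠ (0, 0) → lam ^ p * mu ^ q ≠ 1) {m n i k : ℕ}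
    (h : mu ^ m * (lam / mu) ^ i = mu ^ n * (lam / mu) ^ k) : i = k ∧ m = n := by
  by_contra hne
  refine hres (i - k) ((m - i) - (n - k)) (fun hpq => hne ?_) ?_
  · simp only [Prod.mk.injEq] at hpq
    omega
  · simp only [zpow_sub₀ hlam, zpow_sub₀ hmu, zpow_natCast]
    rw [div_pow, div_pow] at h
    field_simp at h ⊢
    linear_combination h

section

variable {𝕜 : Type*} [NontriviallyNormedField 𝕜] {E : Type*} [NormedAddCommGroup E]
  [NormedSpace 𝕜 E]

theorem degree_eq_and_proportional_of_ratio_invariant {m n : ℕ}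
    {f : ContinuousMultilinearMap 𝕜 (fun _ : Fin m => E) 𝕜}
    {g : ContinuousMultilinearMap 𝕜 (fun _ : Fin n => E) 𝕜}
    (hf : ∃ z, f (fun _ => z) ≠ 0) (hg : ∃ z, g (fun _ => z) ≠ 0)
    {A : E →L[𝕜] E} {v w : E} (hvw : Submodule.span 𝕜 {v, w} = ⊤) {lam mu : 𝕜}
    (hv : A v = lam • v) (hw : A w = mu • w) (hlam : lam ≠ 0) (hmu : mu ≠ 0)
    (hres : ∀ p q : ℤ, (p, q) ≠ (0, 0) → lam ^ p * mu ^ q ≠ 1)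
    (h : ∀ z, f (fun _ => A z) * g (fun _ => z) = f (fun _ => z) * g (fun _ => A z)) :
    m = n ∧ ∃ c, ∀ z, f (fun _ => z) = c * g (fun _ => z) := by
  set ρ := lam / mu
  have hA : ∀ x : 𝕜, A (x • v + w) = mu • ((ρ * x) • v + w) := fun x => by
    rw [map_add, map_smul, hv, hw, smul_add, smul_smul, smul_smul]
    congr 2
    simp only [ρ]
    field_simp
  have hcomp : ∀ {k} (φ : ContinuousMultilinearMap 𝕜 (fun _ : Fin k => E) 𝕜) (x : 𝕜),
      φ (fun _ => A (x • v + w)) = mu ^ k * ((φ.dehomogenize v w).comp (C ρ * X)).eval x :=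
    fun φ x => by rw [hA, φ.apply_const_smul, eval_comp, φ.eval_dehomogenize]; simp
  have hne : ∀ {k} (φ : ContinuousMultilinearMap 𝕜 (fun _ : Fin k => E) 𝕜),
      (∃ z, φ (fun _ => z) ≠ 0) → φ.dehomogenize v w ≠ 0 :=
    fun φ ⟨z, hz⟩ h0 => hz (φ.apply_diag_eq_zero_of_dehomogenize_eq_zero v w hvw h0 z)
  have hid : C (mu ^ m) * (f.dehomogenize v w).comp (C ρ * X) * g.dehomogenize v w =
      C (mu ^ n) * f.dehomogenize v w * (g.dehomogenize v w).comp (C ρ * X) := by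
    refine Polynomial.funext fun x => ?_
    have := h (x • v + w)
    simp only [hcomp, ← ContinuousMultilinearMap.eval_dehomogenize] at this
    simp only [eval_mul, eval_C]
    linear_combination this
  obtain ⟨-, rfl⟩ := eq_of_mul_div_pow_eq hlam hmu hres
    (mul_pow_natDegree_eq_of_comp_mul_eq (hne f hf) (hne g hg) (div_ne_zero hlam hmu) hid)
  have hρ : Function.Injective (ρ ^ · : ℕ → 𝕜) := fun i k hik =>
    (eq_of_mul_div_pow_eq hlam hmu hres (m := 0) (n := 0) (by simpa using hik)).1
  obtain ⟨c, hc⟩ := exists_eq_C_mul_of_comp_mul_eq (hne g hg) hρ <| by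
    rw [mul_assoc, mul_assoc] at hid
    exact mul_left_cancel₀ (by simp [hmu]) hid
  exact ⟨rfl, c, f.apply_diag_eq_mul_of_dehomogenize_eq v w hvw hc⟩

theorem HasFPowerSeriesAt.hasLeadingTerm_comp {f : E → 𝕜} {p : FormalMultilinearSeries 𝕜 E 𝕜}
    (hf : HasFPowerSeriesAt f p 0) {m : ℕ} (hm : ∀ k < m, ∀ z, p k (fun _ => z) = 0)
    {γ : 𝕜 → E} {v : E} (hγ : HasDerivAt γ v 0) (hγ0 : γ 0 = 0) :
    HasLeadingTerm (fun t => f (γ t)) m (p m fun _ => v) := by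
  have hγO : γ =O[𝓝 0] fun t => t := by
    simpa [hγ0] using hγ.hasFDerivAt.isBigO_sub
  have hpartial : ∀ y, p.partialSum (m + 1) y = p m (fun _ => y) := by
    intro y
    rw [FormalMultilinearSeries.partialSum, Finset.sum_range_succ,
      Finset.sum_eq_zero fun k hk => hm k (Finset.mem_range.1 hk) y, zero_add]
  have htail : (fun t => f (γ t) - p m (fun _ => γ t)) =o[𝓝 0] fun t => t ^ m := by
    have hγt : Tendsto γ (𝓝 0) (𝓝 0) := hγ0 ▸ hγ.continuousAt.tendsto
    have := (hf.isBigO_sub_partialSum_pow (m + 1)).comp_tendsto hγt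
    simp only [zero_add, hpartial, Function.comp_def] at this
    exact (this.trans (by simpa using hγO.norm_left.pow (m + 1))).trans_isLittleO
      (isLittleO_pow_pow (Nat.lt_succ_self m))
  refine (htail.add ((p m).isLittleO_apply_curve_sub_apply_tangent hγ hγ0)).congr
    (fun t => ?_) fun _ => rfl
  rw [(p m).apply_const_smul]
  ring

theorem HasFPowerSeriesAt.homogeneousPart_comp_mul_eq {f g : E → 𝕜}
    {p q : FormalMultilinearSeries 𝕜 E 𝕜} (hf : HasFPowerSeriesAt f p 0)
    (hg : HasFPowerSeriesAt g q 0) {m n : ℕ}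
    (hm : ∀ k < m, ∀ z, p k (fun _ => z) = 0) (hn : ∀ k < n, ∀ z, q k (fun _ => z) = 0)
    {F : E → E} {A : E →L[𝕜] E} (hF : HasFDerivAt F A 0) (hF0 : F 0 = 0)
    (hrel : ∀ᶠ z in 𝓝 0, f (F z) * g z = f z * g (F z)) (z : E) :
    p m (fun _ => A z) * q n (fun _ => z) = p m (fun _ => z) * q n (fun _ => A z) := by
  have hline : HasDerivAt (fun t : 𝕜 => t • z) z 0 := by
    simpa using (hasDerivAt_id (0 : 𝕜)).smul_const z
  have hcurve : HasDerivAt (fun t : 𝕜 => F (t • z)) (A z) 0 :=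
    (zero_smul 𝕜 z ▸ hF).comp_hasDerivAt 0 hline
  have hline0 : (0 : 𝕜) • z = 0 := zero_smul 𝕜 z
  have hcurve0 : F ((0 : 𝕜) • z) = 0 := by rw [hline0, hF0]
  have hrel' : ∀ᶠ t in 𝓝 (0 : 𝕜), f (F (t • z)) * g (t • z) = f (t • z) * g (F (t • z)) :=
    (hline0 ▸ hline.continuousAt.tendsto).eventually hrel
  exact ((hf.hasLeadingTerm_comp hm hcurve hcurve0).mul
    (hg.hasLeadingTerm_comp hn hline hline0)).unique
    (((hf.hasLeadingTerm_comp hm hline hline0).mul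
      (hg.hasLeadingTerm_comp hn hcurve hcurve0)).congr (hrel'.mono fun t ht => ht.symm))

/-- Unlike `FormalMultilinearSeries.order`, this only sees the homogeneous parts
`z ↦ p k (fun _ => z)`: the non-symmetric parts of the `p k` never contribute to the series. -/
def FormalMultilinearSeries.HasHomogeneousOrder {G : Type*} [NormedAddCommGroup G]
    [NormedSpace 𝕜 G] (p : FormalMultilinearSeries 𝕜 E G) (m : ℕ) : Prop :=
  (∃ z, p m (fun _ => z) ≠ 0) ∧ ∀ k < m, ∀ z, p k (fun _ => z) = 0

theorem HasFPowerSeriesAt.exists_hasHomogeneousOrder {G : Type*} [NormedAddCommGroup G]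
    [NormedSpace 𝕜 G] {f : E → G} {p : FormalMultilinearSeries 𝕜 E G} {U : Set E} {x : E}
    (hf : HasFPowerSeriesAt f p x) (hfU : AnalyticOnNhd 𝕜 f U) (hU : IsPreconnected U)
    (hx : x ∈ U) (hne : ∃ z ∈ U, f z ≠ 0) : ∃ m, p.HasHomogeneousOrder m := by
  classical
  have hp : ∃ m z, p m (fun _ => z) ≠ 0 := by
    by_contra! hp
    have hzero : f =ᶠ[𝓝 x] 0 := by
      filter_upwards [hf.eventually_hasSum_sub] with y hy
      rw [funext fun n => hp n (y - x)] at hy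
      exact hy.unique hasSum_zero
    obtain ⟨z, hz, hfz⟩ := hne
    exact hfz (hfU.eqOn_zero_of_preconnected_of_eventuallyEq_zero hU hx hzero hz)
  exact ⟨Nat.find hp, Nat.find_spec hp, fun k hk => by simpa using Nat.find_min hp hk⟩

theorem FormalMultilinearSeries.lt_of_hasHomogeneousOrder_sub_smul
    {p q : FormalMultilinearSeries 𝕜 E 𝕜} {m m₁ : ℕ} (hp : ∀ k < m, ∀ z, p k (fun _ => z) = 0)
    (hq : ∀ k < m, ∀ z, q k (fun _ => z) = 0) {c : 𝕜}
    (hc : ∀ z, p m (fun _ => z) = c * q m (fun _ => z))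
    (h : (p - c • q).HasHomogeneousOrder m₁) : m < m₁ := by
  by_contra! hle
  obtain ⟨z, hz⟩ := h.1
  apply hz
  rcases hle.lt_or_eq with hlt | rfl
  · simp [hp _ hlt, hq _ hlt]
  · simp [hc]

theorem HasFPowerSeriesAt.homogeneousOrder_eq_and_proportional {f g : E → 𝕜}
    {p q : FormalMultilinearSeries 𝕜 E 𝕜} (hf : HasFPowerSeriesAt f p 0)
    (hg : HasFPowerSeriesAt g q 0) {m n : ℕ} (hm : p.HasHomogeneousOrder m)
    (hn : q.HasHomogeneousOrder n) {F : E → E} {A : E →L[𝕜] E} (hF : HasFDerivAt F A 0)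
    (hF0 : F 0 = 0) (hrel : ∀ᶠ z in 𝓝 0, f (F z) * g z = f z * g (F z)) {v w : E}
    (hvw : Submodule.span 𝕜 {v, w} = ⊤) {lam mu : 𝕜} (hv : A v = lam • v) (hw : A w = mu • w)
    (hlam : lam ≠ 0) (hmu : mu ≠ 0) (hres : ∀ p q : ℤ, (p, q) ≠ (0, 0) → lam ^ p * mu ^ q ≠ 1) :
    m = n ∧ ∃ c, ∀ z, p m (fun _ => z) = c * q n (fun _ => z) :=
  degree_eq_and_proportional_of_ratio_invariant hm.1 hn.1 hvw hv hw hlam hmu hres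
    (hf.homogeneousPart_comp_mul_eq hg hm.2 hn.2 hF hF0 hrel)

theorem HasFPowerSeriesAt.exists_resonance_of_first_integral {f g : E → 𝕜}
    {p q : FormalMultilinearSeries 𝕜 E 𝕜} (hf : HasFPowerSeriesAt f p 0)
    (hg : HasFPowerSeriesAt g q 0) (hq : ∃ n, q.HasHomogeneousOrder n)
    (hpq : ∀ c : 𝕜, ∃ m, (p - c • q).HasHomogeneousOrder m) {F : E → E} {A : E →L[𝕜] E}
    (hF : HasFDerivAt F A 0) (hF0 : F 0 = 0) (hrel : ∀ᶠ z in 𝓝 0, f (F z) * g z = f z * g (F z))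
    {v w : E} (hvw : Submodule.span 𝕜 {v, w} = ⊤) {lam mu : 𝕜} (hv : A v = lam • v)
    (hw : A w = mu • w) (hlammu : lam * mu ≠ 0) :
    ∃ a b : ℤ, (a, b) ≠ (0, 0) ∧ lam ^ a * mu ^ b = 1 := by
  by_contra! hres
  have hlam := left_ne_zero_of_mul hlammu
  have hmu := right_ne_zero_of_mul hlammu
  obtain ⟨n, hn⟩ := hq
  obtain ⟨m, hm⟩ : ∃ m, p.HasHomogeneousOrder m := by simpa using hpq 0
  obtain ⟨rfl, c, hc⟩ := hf.homogeneousOrder_eq_and_proportional hg hm hn hF hF0 hrel hvw hv hw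
    hlam hmu hres
  obtain ⟨m₁, hm₁⟩ := hpq c
  have hrel₁ : ∀ᶠ z in 𝓝 0, (f - c • g) (F z) * g z = (f - c • g) z * g (F z) :=
    hrel.mono fun z hz => by
      simp only [Pi.sub_apply, Pi.smul_apply, smul_eq_mul]
      linear_combination hz
  obtain ⟨rfl, -⟩ := (hf.sub hg.const_smul).homogeneousOrder_eq_and_proportional hg hm₁ hn hF
    hF0 hrel₁ hvw hv hw hlam hmu hres
  exact lt_irrefl _ (FormalMultilinearSeries.lt_of_hasHomogeneousOrder_sub_smul hm.2 hn.2 hc hm₁)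

end

theorem meromorphic_first_integral_resonant_general
    (U : Set (ℂ × ℂ)) (hUopen : IsOpen U) (hUconn : IsConnected U)
    (hU0 : ((0 : ℂ), (0 : ℂ)) ∈ U)
    (F : ℂ × ℂ → ℂ × ℂ) (hFanal : AnalyticOn ℂ F U)
    (hF0 : F (0, 0) = (0, 0))
    (lam mu : ℂ) (v w : ℂ × ℂ)
    (hvw : LinearIndependent ℂ ![v, w])
    (hv : fderiv ℂ F (0, 0) v = lam • v)
    (hw : fderiv ℂ F (0, 0) w = mu • w)
    (hlammu : lam * mu ≠ 0)
    (P Q : ℂ × ℂ → ℂ)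
    (hP : AnalyticOn ℂ P U) (hQ : AnalyticOn ℂ Q U)
    (hQne : ∃ z ∈ U, Q z ≠ 0)
    (hnonconst : ¬ ∃ c : ℂ, ∀ z ∈ U, P z = c * Q z)
    (hfirstint : ∀ z ∈ U, F z ∈ U → P (F z) * Q z = P z * Q (F z)) :
    ∃ p q : ℤ, (p, q) ≠ ((0 : ℤ), (0 : ℤ)) ∧ lam ^ p * mu ^ q = 1 := by
  have hU0' : (0 : ℂ × ℂ) ∈ U := hU0
  have hspan : Submodule.span ℂ {v, w} = ⊤ := by
    rw [Set.pair_comm]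
    simpa [Matrix.range_cons_cons_empty] using hvw.span_eq_top_of_card_eq_finrank (by simp)
  rw [hUopen.analyticOn_iff_analyticOnNhd] at hFanal hP hQ
  obtain ⟨pP, hPs⟩ := hP _ hU0'
  obtain ⟨pQ, hQs⟩ := hQ _ hU0'
  have hF : HasFDerivAt F (fderiv ℂ F 0) 0 := (hFanal _ hU0').differentiableAt.hasFDerivAt
  refine hPs.exists_resonance_of_first_integral hQs
    (hQs.exists_hasHomogeneousOrder hQ hUconn.isPreconnected hU0' hQne) (fun c => ?_) hF hF0 ?_
    hspan hv hw hlammu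
  · refine (hPs.sub hQs.const_smul).exists_hasHomogeneousOrder (hP.sub hQ.const_smul)
      hUconn.isPreconnected hU0' ?_
    by_contra! h
    exact hnonconst ⟨c, fun z hz => sub_eq_zero.1 (by simpa using h z hz)⟩
  · filter_upwards [hUopen.mem_nhds hU0',
      hF.continuousAt.preimage_mem_nhds (hUopen.mem_nhds (hF0 ▸ hU0'))] with z hz hFz
    exact hfirstint z hz hFz

/-- Theorem 1 (i) of the paper: if an analytic map of `ℂ²` fixing the origin, whose
differential at the origin is diagonalizable with eigenvalues `λ, μ` with `λμ ≠ 0`,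
admits a meromorphic first integral `P/Q` near the origin, then the eigenvalues are
resonant: `λ^p μ^q = 1` for some `(p,q) ≠ (0,0)` in `ℤ²`. -/
theorem meromorphic_first_integral_resonant
    (U : Set (ℂ × ℂ)) (hUopen : IsOpen U) (hUconn : IsConnected U)
    (hU0 : ((0 : ℂ), (0 : ℂ)) ∈ U)
    (F : ℂ × ℂ → ℂ × ℂ) (hFanal : AnalyticOn ℂ F U)
    (hF0 : F (0, 0) = (0, 0))
    (lam mu : ℂ) (v w : ℂ × ℂ)
    (hvw : LinearIndependent ℂ ![v, w])
    (hv : fderiv ℂ F (0, 0) v = lam • v)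
    (hw : fderiv ℂ F (0, 0) w = mu • w)
    (hlammu : lam * mu ≠ 0)
    (P Q : ℂ × ℂ → ℂ)
    (hP : AnalyticOn ℂ P U) (hQ : AnalyticOn ℂ Q U)
    (hcoprime : ∀ z ∈ U, P z = 0 → Q z = 0 →
      ∀ᶠ y in 𝓝[≠] z, ¬ (y ∈ U ∧ P y = 0 ∧ Q y = 0))
    (hQne : ∃ z ∈ U, Q z ≠ 0)
    (hnonconst : ¬ ∃ c : ℂ, ∀ z ∈ U, P z = c * Q z)
    (hfirstint : ∀ z ∈ U, F z ∈ U → P (F z) * Q z = P z * Q (F z)) :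
    ∃ p q : ℤ, (p, q) ≠ ((0 : ℤ), (0 : ℤ)) ∧ lam ^ p * mu ^ q = 1 :=
  meromorphic_first_integral_resonant_general U hUopen hUconn hU0 F hFanal hF0 lam mu v w hvw hv hw
    hlammu P Q hP hQ hQne hnonconst hfirstint
end

section
/- Let a, b, c, d, e, f be positive real numbers and define V_{f,e,d,c,b,a}(x,y) = (af + (a+bf)x + (f+ae)y + bx² + ey² + cx²y + dxy²)/(xy) for x, y > 0. Then V_{f,e,d,c,b,a} is a first integral of the composition map F_{f,e,d,c,b,a} = F_f ∘ F_e ∘ F_d ∘ F_c ∘ F_b ∘ F_a on Q⁺: for every (x,y) ∈ Q⁺, V_{f,e,d,c,b,a}(F_{f,e,d,c,b,a}(x,y)) = V_{f,e,d,c,b,a}(x,y). -/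
/-!
A single Lyness step rotates the parameters of `lynessV` cyclically:
`lynessV b c d e f a ∘ F_a = lynessV a b c d e f`, a polynomial identity after clearing
denominators. Six steps run through all six rotations and return to `lynessV a b c d e f`;
positivity of the parameters keeps every intermediate point in `Q⁺`, where no denominator vanishes.
-/

/-- The Lyness map `F_a(x,y) = (y, (a+y)/x)`. -/
noncomputable def lyness (a : ℝ) (p : ℝ × ℝ) : ℝ × ℝ := (p.2, (a + p.2) / p.1)

/-- The rational function `V_{f,e,d,c,b,a}(x,y)` of Corollary 3 of the paper. -/
noncomputable def lynessV (a b c d e f x y : ℝ) : ℝ :=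
  (a * f + (a + b * f) * x + (f + a * e) * y + b * x ^ 2 + e * y ^ 2 +
      c * x ^ 2 * y + d * x * y ^ 2) / (x * y)

def openFirstQuadrant : Set (ℝ × ℝ) := {p | 0 < p.1 ∧ 0 < p.2}

section

variable {a : ℝ}

theorem lyness_mapsTo_openFirstQuadrant (ha : 0 < a) :
    Set.MapsTo (lyness a) openFirstQuadrant openFirstQuadrant :=
  fun _ ⟨hx, hy⟩ => ⟨hy, div_pos (add_pos ha hy) hx⟩

theorem lynessV_lyness (b c d e f : ℝ) {x y : ℝ} (hx : x ≠ 0) (hy : y ≠ 0) (hay : a + y ≠ 0) :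
    lynessV b c d e f a (lyness a (x, y)).1 (lyness a (x, y)).2 = lynessV a b c d e f x y := by
  simp only [lyness, lynessV]
  field_simp
  ring

theorem lynessV_lyness_of_mem {b c d e f : ℝ} (ha : 0 < a) {p : ℝ × ℝ}
    (hp : p ∈ openFirstQuadrant) :
    lynessV b c d e f a (lyness a p).1 (lyness a p).2 = lynessV a b c d e f p.1 p.2 :=
  lynessV_lyness b c d e f hp.1.ne' hp.2.ne' (add_pos ha hp.2).ne'

end

/-- Corollary 3 (ii) of the paper (case `k = 6`): `V_{f,e,d,c,b,a}` is a first integral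
of the composition map `F_{f,e,d,c,b,a} = F_f ∘ F_e ∘ F_d ∘ F_c ∘ F_b ∘ F_a` on the open
first quadrant. -/
theorem lynessV_first_integral (a b c d e f : ℝ)
    (ha : 0 < a) (hb : 0 < b) (hc : 0 < c) (hd : 0 < d) (he : 0 < e) (hf : 0 < f) :
    ∀ x y : ℝ, 0 < x → 0 < y →
      lynessV a b c d e f
        ((lyness f ∘ lyness e ∘ lyness d ∘ lyness c ∘ lyness b ∘ lyness a) (x, y)).1
        ((lyness f ∘ lyness e ∘ lyness d ∘ lyness c ∘ lyness b ∘ lyness a) (x, y)).2 =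
      lynessV a b c d e f x y := by
  intro x y hx hy
  have h₀ : (x, y) ∈ openFirstQuadrant := ⟨hx, hy⟩
  have h₁ := lyness_mapsTo_openFirstQuadrant ha h₀
  have h₂ := lyness_mapsTo_openFirstQuadrant hb h₁
  have h₃ := lyness_mapsTo_openFirstQuadrant hc h₂
  have h₄ := lyness_mapsTo_openFirstQuadrant hd h₃
  have h₅ := lyness_mapsTo_openFirstQuadrant he h₄
  simp only [Function.comp_apply]
  rw [lynessV_lyness_of_mem hf h₅, lynessV_lyness_of_mem he h₄, lynessV_lyness_of_mem hd h₃,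
    lynessV_lyness_of_mem hc h₂, lynessV_lyness_of_mem hb h₁, lynessV_lyness_of_mem ha h₀]
end

section
/- Let a_1, a_2, a_3, a_4, a_5 be positive real numbers with a_i ≠ 1 for every i and min{a_1,...,a_5} < 1 < max{a_1,...,a_5}, extended to a 5-periodic sequence (a_n). Then there exists a nonempty open set U ⊆ Q⁺ such that for every initial condition (x_1, x_2) ∈ U, the solution of the recurrence x_{n+2} = (a_n + x_{n+1})/x_n satisfies liminf_{n→∞} x_n = 0 and limsup_{n→∞} x_n = +∞ (i.e., for every ε > 0 there are infinitely many n with x_n < ε, and for every M there are infinitely many n with x_n > M). In particular the recurrence is not persistent. -/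
/-!
Shift time so that `a_s < 1 < a_{s+1}`. If `x_s` is large and `x_{s+1}` small, then one period
later `x_{s+5} ≥ x_s / (a_s + x_{s+1})`, because `x_n x_{n+3} ≥ 1` along every solution, and
`x_{s+6} ≈ x_{s+1} / a_{s+1}` is small again. Hence `x_{s+5k}` grows geometrically while
`x_{s+5k+2} ≤ 1 / x_{s+5k}` tends to `0`. These initial pairs form an open rectangle, whose
preimage under the continuous and surjective time-`s` map of `Q⁺` is the required open set.
-/

open Filter Topology Set

namespace Lyness

def posQuadrant : Set (ℝ × ℝ) := {p | 0 < p.1 ∧ 0 < p.2}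

def IsSolution (b y : ℕ → ℝ) : Prop :=
  ∀ n, y (n + 2) = (b n + y (n + 1)) / y n

noncomputable def seq (b : ℕ → ℝ) (p : ℝ × ℝ) : ℕ → ℝ
  | 0 => p.1
  | 1 => p.2
  | n + 2 => (b n + seq b p (n + 1)) / seq b p n

/-- `liminf y = 0` and `limsup y = +∞`. -/
def Oscillates (y : ℕ → ℝ) : Prop :=
  (∀ ε > 0, ∃ᶠ n in atTop, y n < ε) ∧ ∀ M, ∃ᶠ n in atTop, M < y n

theorem Oscillates.of_comp_add {y : ℕ → ℝ} {k : ℕ} (h : Oscillates fun n => y (n + k)) :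
    Oscillates y :=
  ⟨fun ε hε => (tendsto_add_atTop_nat k).frequently (h.1 ε hε),
    fun M => (tendsto_add_atTop_nat k).frequently (h.2 M)⟩

theorem Oscillates.of_tendsto {y : ℕ → ℝ} {f g : ℕ → ℕ} (hf : Tendsto f atTop atTop)
    (hg : Tendsto g atTop atTop) (h0 : Tendsto (y ∘ f) atTop (𝓝 0))
    (hinf : Tendsto (y ∘ g) atTop atTop) : Oscillates y :=
  ⟨fun _ hε => hf.frequently (h0.eventually (gt_mem_nhds hε)).frequently,
    fun M => hg.frequently (hinf.eventually_gt_atTop M).frequently⟩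

theorem isSolution_seq (b : ℕ → ℝ) (p : ℝ × ℝ) : IsSolution b (seq b p) := fun _ => rfl

namespace IsSolution

variable {b y : ℕ → ℝ}

theorem shift (h : IsSolution b y) (k : ℕ) :
    IsSolution (fun n => b (n + k)) (fun n => y (n + k)) := fun n => by
  simpa only [Nat.add_right_comm] using h (n + k)

theorem eq_seq (h : IsSolution b y) {p : ℝ × ℝ} (h0 : y 0 = p.1) (h1 : y 1 = p.2) :
    y = seq b p := by
  suffices ∀ n, y n = seq b p n ∧ y (n + 1) = seq b p (n + 1) from funext fun n => (this n).1
  intro n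
  induction n with
  | zero => exact ⟨h0, h1⟩
  | succ n ih => exact ⟨ih.2, (h n).trans (by rw [ih.1, ih.2]; rfl)⟩

theorem pos (h : IsSolution b y) (hb : ∀ n, 0 < b n) (h0 : 0 < y 0) (h1 : 0 < y 1) (n : ℕ) :
    0 < y n := by
  suffices ∀ n, 0 < y n ∧ 0 < y (n + 1) from (this n).1
  intro n
  induction n with
  | zero => exact ⟨h0, h1⟩
  | succ n ih => exact ⟨ih.2, (h n).symm ▸ div_pos (add_pos (hb n) ih.2) ih.1⟩

theorem mul_eq (h : IsSolution b y) (hy : ∀ n, 0 < y n) (n : ℕ) :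
    y (n + 2) * y n = b n + y (n + 1) := by
  rw [h n, div_mul_cancel₀ _ (hy n).ne']

theorem one_le_mul_add_three (h : IsSolution b y) (hb : ∀ n, 0 ≤ b n) (hy : ∀ n, 0 < y n)
    (n : ℕ) : 1 ≤ y n * y (n + 3) := by
  have e2 : y (n + 2) * y n = b n + y (n + 1) := h.mul_eq hy n
  have e3 : y (n + 3) * y (n + 1) = b (n + 1) + y (n + 2) := h.mul_eq hy (n + 1)
  refine le_of_mul_le_mul_right ?_ (hy (n + 1))
  calc 1 * y (n + 1) ≤ b (n + 1) * y n + b n + y (n + 1) := by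
        nlinarith [hb n, hb (n + 1), hy n]
    _ = y n * y (n + 3) * y (n + 1) := by linear_combination (-y n) * e3 - e2

theorem div_le_apply_five (h : IsSolution b y) (hb : ∀ n, 0 ≤ b n) (hy : ∀ n, 0 < y n) {D : ℝ}
    (h1 : y 1 ≤ D) : y 0 / (b 0 + D) ≤ y 5 :=
  calc y 0 / (b 0 + D) ≤ y 0 / (b 0 + y 1) :=
        div_le_div_of_nonneg_left (hy 0).le (by linarith [hb 0, hy 1]) (by linarith)
    _ = 1 / y 2 := by rw [h 0, one_div_div]
    _ ≤ y 5 := by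
        rw [div_le_iff₀ (hy 2), mul_comm]
        exact h.one_le_mul_add_three hb hy 2

theorem apply_six_le (h : IsSolution b y) (hb : ∀ n, 0 < b n) (hy : ∀ n, 0 < y n) {D T : ℝ}
    (hT : 0 < T) (hDb : b 0 + D ≤ 1) (hTb : b 4 + b 3 / b 1 ≤ (b 1 - 1) * T) (h0 : T ≤ y 0)
    (h1 : y 1 ≤ D) : y 6 ≤ D := by
  have e2 : y 2 * y 0 = b 0 + y 1 := h.mul_eq hy 0
  have e3 : y 3 * y 1 = b 1 + y 2 := h.mul_eq hy 1
  have e4 : y 4 * y 2 = b 2 + y 3 := h.mul_eq hy 2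
  have e5 : y 5 * y 3 = b 3 + y 4 := h.mul_eq hy 3
  have e6 : y 6 * y 4 = b 4 + y 5 := h.mul_eq hy 4
  have hD : D ≤ 1 := by linarith [hb 0]
  have hb1 : 0 ≤ b 1 - 1 :=
    (pos_of_mul_pos_left ((add_pos (hb 4) (div_pos (hb 3) (hb 1))).trans_le hTb) hT.le).le
  have hy2 : y 2 * T ≤ 1 := by nlinarith [hy 2]
  have hy3 : b 1 ≤ D * y 3 := by nlinarith [hy 2, hy 3]
  have hy4 : T * y 3 ≤ y 4 := by nlinarith [hy 3, hy 4, hb 2]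
  have k1 : b 3 ≤ b 3 / b 1 * y 3 := by
    rw [div_mul_eq_mul_div, le_div_iff₀ (hb 1)]
    exact mul_le_mul_of_nonneg_left (hy3.trans (mul_le_of_le_one_left (hy 3).le hD)) (hb 3).le
  have k2 : (b 4 + b 3 / b 1) * y 3 ≤ (b 1 - 1) * y 4 :=
    calc (b 4 + b 3 / b 1) * y 3 ≤ (b 1 - 1) * T * y 3 :=
          mul_le_mul_of_nonneg_right hTb (hy 3).le
      _ ≤ (b 1 - 1) * y 4 := by rw [mul_assoc]; exact mul_le_mul_of_nonneg_left hy4 hb1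
  have k3 : b 1 * y 4 ≤ D * y 3 * y 4 := mul_le_mul_of_nonneg_right hy3 (hy 4).le
  refine le_of_mul_le_mul_right ?_ (mul_pos (hy 3) (hy 4))
  calc y 6 * (y 3 * y 4) = b 4 * y 3 + b 3 + y 4 := by linear_combination y 3 * e6 + e5
    _ ≤ D * (y 3 * y 4) := by linear_combination k1 + k2 + k3

theorem pow_mul_le_apply_five_mul (h : IsSolution b y) (hper : Function.Periodic b 5)
    (hb : ∀ n, 0 < b n) {D T : ℝ} (hT : 0 < T) (hDb : b 0 + D < 1)
    (hTb : b 4 + b 3 / b 1 ≤ (b 1 - 1) * T) (h0 : T ≤ y 0) (h1 : 0 < y 1) (h1D : y 1 ≤ D)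
    (k : ℕ) : (b 0 + D)⁻¹ ^ k * y 0 ≤ y (5 * k) ∧ y (5 * k + 1) ≤ D := by
  induction k generalizing y with
  | zero => simpa using h1D
  | succ k ih =>
    have hy := h.pos hb (hT.trans_le h0) h1
    have hbD : 0 < b 0 + D := by linarith [hb 0]
    have h5 : (b 0 + D)⁻¹ * y 0 ≤ y 5 := by
      simpa only [div_eq_inv_mul] using h.div_le_apply_five (fun n => (hb n).le) hy h1D
    have hy0 : y 0 ≤ (b 0 + D)⁻¹ * y 0 :=
      le_mul_of_one_le_left (hy 0).le ((one_lt_inv₀ hbD).2 hDb).le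
    have hshift : IsSolution b (fun n => y (n + 5)) := funext hper ▸ h.shift 5
    obtain ⟨ih0, ih1⟩ := ih hshift (h0.trans (hy0.trans h5)) (hy 6)
      (h.apply_six_le hb hy hT hDb.le hTb h0 h1D)
    refine ⟨?_, ih1⟩
    calc (b 0 + D)⁻¹ ^ (k + 1) * y 0 = (b 0 + D)⁻¹ ^ k * ((b 0 + D)⁻¹ * y 0) := by ring
      _ ≤ (b 0 + D)⁻¹ ^ k * y 5 := by gcongr
      _ ≤ y (5 * (k + 1)) := ih0

theorem oscillates (h : IsSolution b y) (hper : Function.Periodic b 5) (hb : ∀ n, 0 < b n)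
    {D T : ℝ} (hT : 0 < T) (hDb : b 0 + D < 1) (hTb : b 4 + b 3 / b 1 ≤ (b 1 - 1) * T)
    (h0 : T ≤ y 0) (h1 : 0 < y 1) (h1D : y 1 ≤ D) : Oscillates y := by
  have hy := h.pos hb (hT.trans_le h0) h1
  have hbD : 0 < b 0 + D := by linarith [hb 0]
  have trap := h.pow_mul_le_apply_five_mul hper hb hT hDb hTb h0 h1 h1D
  have hlarge : Tendsto (fun k => y (5 * k)) atTop atTop :=
    tendsto_atTop_mono (fun k => (trap k).1)
      ((tendsto_pow_atTop_atTop_of_one_lt ((one_lt_inv₀ hbD).2 hDb)).atTop_mul_const (hy 0))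
  -- `y (5k + 2) * y (5k) = b 0 + y (5k + 1) ≤ 1`
  have hsmall : ∀ k, y (5 * k + 2) ≤ (y (5 * k))⁻¹ := by
    intro k
    have hbk : b (5 * k) = b 0 := by simpa [mul_comm] using hper.nat_mul_eq k
    rw [← one_div, le_div_iff₀ (hy _), h.mul_eq hy, hbk]
    linarith [(trap k).2]
  refine .of_tendsto (f := fun k => 5 * k + 2) (g := fun k => 5 * k)
    (tendsto_atTop_mono (fun k => show k ≤ 5 * k + 2 by omega) tendsto_id)
    (tendsto_atTop_mono (fun k => show k ≤ 5 * k by omega) tendsto_id)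
    (tendsto_of_tendsto_of_tendsto_of_le_of_le tendsto_const_nhds hlarge.inv_tendsto_atTop
      (fun k => (hy _).le) hsmall) hlarge

end IsSolution

section seq

variable {b : ℕ → ℝ}

theorem continuousOn_seq (hb : ∀ n, 0 < b n) (n : ℕ) :
    ContinuousOn (fun p => seq b p n) posQuadrant := by
  suffices ∀ n, ContinuousOn (fun p => seq b p n) posQuadrant ∧
      ContinuousOn (fun p => seq b p (n + 1)) posQuadrant from (this n).1
  intro n
  induction n with
  | zero => exact ⟨continuous_fst.continuousOn, continuous_snd.continuousOn⟩
  | succ n ih =>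
    refine ⟨ih.2, (continuousOn_const.add ih.2).div ih.1 fun p hp => ?_⟩
    exact ((isSolution_seq b p).pos hb hp.1 hp.2 n).ne'

theorem exists_seq_eq (hb : ∀ n, 0 < b n) (s : ℕ) :
    ∀ q ∈ posQuadrant, ∃ p ∈ posQuadrant, (seq b p s, seq b p (s + 1)) = q := by
  induction s with
  | zero => exact fun q hq => ⟨q, hq, rfl⟩
  | succ s ih =>
    rintro ⟨u, v⟩ ⟨hu, hv⟩
    obtain ⟨p, hp, hps⟩ := ih ((b s + u) / v, u) ⟨div_pos (add_pos (hb s) hu) hv, hu⟩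
    rw [Prod.mk.injEq] at hps
    refine ⟨p, hp, ?_⟩
    change (seq b p (s + 1), (b s + seq b p (s + 1)) / seq b p s) = (u, v)
    rw [hps.1, hps.2, div_div_cancel₀ (add_pos (hb s) hu).ne']

end seq

def HasOscillatingRegion (b : ℕ → ℝ) : Prop :=
  ∃ U : Set (ℝ × ℝ), IsOpen U ∧ U.Nonempty ∧ U ⊆ posQuadrant ∧ ∀ p ∈ U, Oscillates (seq b p)

theorem hasOscillatingRegion_of_lt_one_lt {b : ℕ → ℝ} (hper : Function.Periodic b 5)
    (hb : ∀ n, 0 < b n) (h0 : b 0 < 1) (h1 : 1 < b 1) : HasOscillatingRegion b := by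
  obtain ⟨D, hD, hDb⟩ : ∃ D, 0 < D ∧ b 0 + D < 1 := ⟨(1 - b 0) / 2, by linarith, by linarith⟩
  obtain ⟨T, hT, hTb⟩ : ∃ T, 0 < T ∧ b 4 + b 3 / b 1 ≤ (b 1 - 1) * T :=
    ⟨(b 4 + b 3 / b 1) / (b 1 - 1), div_pos (add_pos (hb 4) (div_pos (hb 3) (hb 1))) (by linarith),
      (mul_div_cancel₀ _ (by linarith)).ge⟩
  refine ⟨Ioi T ×ˢ Ioo 0 D, isOpen_Ioi.prod isOpen_Ioo, ⟨(T + 1, D / 2), ?_, ?_, ?_⟩,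
    fun p hp => ⟨hT.trans hp.1, hp.2.1⟩, fun p hp => ?_⟩
  exacts [lt_add_one T, half_pos hD, half_lt_self hD,
    (isSolution_seq b p).oscillates hper hb hT hDb hTb hp.1.le hp.2.1 hp.2.2.le]

theorem HasOscillatingRegion.of_shift {b : ℕ → ℝ} (hb : ∀ n, 0 < b n) (s : ℕ)
    (h : HasOscillatingRegion fun n => b (n + s)) : HasOscillatingRegion b := by
  obtain ⟨R, hRo, ⟨q, hq⟩, hRQ, hR⟩ := h
  let Φ : ℝ × ℝ → ℝ × ℝ := fun p => (seq b p s, seq b p (s + 1))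
  have hQ : IsOpen posQuadrant :=
    (isOpen_lt continuous_const continuous_fst).inter (isOpen_lt continuous_const continuous_snd)
  refine ⟨posQuadrant ∩ Φ ⁻¹' R,
    ((continuousOn_seq hb s).prodMk (continuousOn_seq hb (s + 1))).isOpen_inter_preimage hQ hRo,
    ?_, inter_subset_left, ?_⟩
  · obtain ⟨p, hp, hpq⟩ := exists_seq_eq hb s q (hRQ hq)
    exact ⟨p, hp, (hpq ▸ hq : (seq b p s, seq b p (s + 1)) ∈ R)⟩
  · rintro p ⟨-, hp⟩
    refine Oscillates.of_comp_add (k := s) ?_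
    rw [((isSolution_seq b p).shift s).eq_seq (p := Φ p) (by simp [Φ]) (by simp [Φ, add_comm])]
    exact hR _ hp

section crossing

variable {α : Type*} [LinearOrder α] {f : ℕ → α} {c : α}

theorem exists_lt_lt_succ_of_le (hne : ∀ n, f n ≠ c) {i j : ℕ} (hij : i ≤ j) (hi : f i < c)
    (hj : c < f j) : ∃ s, f s < c ∧ c < f (s + 1) := by
  induction j, hij using Nat.le_induction with
  | base => exact absurd hj hi.not_gt
  | succ j _ ih => exact (hne j).lt_or_gt.elim (fun h => ⟨j, h, hj⟩) ih

theorem exists_lt_lt_succ_of_periodic {m : ℕ} (hper : Function.Periodic f m) (hm : 0 < m)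
    (hne : ∀ n, f n ≠ c) {i j : ℕ} (hi : f i < c) (hj : c < f j) :
    ∃ s, f s < c ∧ c < f (s + 1) :=
  exists_lt_lt_succ_of_le hne (le_add_left (Nat.le_mul_of_pos_right i hm))
    hi ((hper.nat_mul i j).symm ▸ hj)

end crossing

end Lyness

/-- Proposition 13 of the paper: for a `5`-periodic sequence of positive coefficients
`a_1, …, a_5`, none equal to `1` and with `min aᵢ < 1 < max aᵢ`, there is a nonempty open
set of positive initial conditions for which the solution of the Lyness recurrence
`x_{n+2} = (a_n + x_{n+1})/x_n` satisfies `liminf xₙ = 0` and `limsup xₙ = +∞`; in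
particular the recurrence is not persistent. -/
theorem lyness_five_periodic_non_persistent
    (a1 a2 a3 a4 a5 : ℝ)
    (h1 : 0 < a1) (h2 : 0 < a2) (h3 : 0 < a3) (h4 : 0 < a4) (h5 : 0 < a5)
    (hne1 : a1 ≠ 1) (hne2 : a2 ≠ 1) (hne3 : a3 ≠ 1) (hne4 : a4 ≠ 1) (hne5 : a5 ≠ 1)
    (hmin : min (min (min (min a1 a2) a3) a4) a5 < 1)
    (hmax : 1 < max (max (max (max a1 a2) a3) a4) a5)
    (a : ℕ → ℝ)
    (ha1 : a 1 = a1) (ha2 : a 2 = a2) (ha3 : a 3 = a3) (ha4 : a 4 = a4) (ha5 : a 5 = a5)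
    (haper : ∀ n, 1 ≤ n → a (n + 5) = a n) :
    (∃ U : Set (ℝ × ℝ), IsOpen U ∧ U.Nonempty ∧ U ⊆ {p : ℝ × ℝ | 0 < p.1 ∧ 0 < p.2} ∧
      ∀ p ∈ U, ∀ x : ℕ → ℝ, x 1 = p.1 → x 2 = p.2 →
        (∀ n, 1 ≤ n → x (n + 2) = (a n + x (n + 1)) / x n) →
        (∀ ε : ℝ, 0 < ε → ∀ N : ℕ, ∃ n, N ≤ n ∧ x n < ε) ∧
        (∀ M : ℝ, ∀ N : ℕ, ∃ n, N ≤ n ∧ M < x n)) ∧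
    ¬ (∀ x : ℕ → ℝ, 0 < x 1 → 0 < x 2 →
        (∀ n, 1 ≤ n → x (n + 2) = (a n + x (n + 1)) / x n) →
        ∃ c C : ℝ, 0 < c ∧ c < C ∧ ∀ n, 1 ≤ n → c < x n ∧ x n < C) := by
  subst ha1 ha2 ha3 ha4 ha5
  set b : ℕ → ℝ := fun n => a (n + 1)
  have hper : Function.Periodic b 5 := fun n => haper (n + 1) n.succ_pos
  have hvals (P : ℝ → Prop) (p1 : P (a 1)) (p2 : P (a 2)) (p3 : P (a 3)) (p4 : P (a 4))
      (p5 : P (a 5)) (n : ℕ) : P (b n) := by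
    rw [← hper.map_mod_nat]
    have : n % 5 < 5 := Nat.mod_lt n (by norm_num)
    interval_cases n % 5 <;> assumption
  have hb := hvals (0 < ·) h1 h2 h3 h4 h5
  obtain ⟨i, hi⟩ : ∃ i, b i < 1 := by
    simp only [min_lt_iff] at hmin
    rcases hmin with (((h | h) | h) | h) | h <;> exact ⟨_, h⟩
  obtain ⟨j, hj⟩ : ∃ j, 1 < b j := by
    simp only [lt_max_iff] at hmax
    rcases hmax with (((h | h) | h) | h) | h <;> exact ⟨_, h⟩
  obtain ⟨s, hs, hs1⟩ := Lyness.exists_lt_lt_succ_of_periodic hper (by norm_num)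
    (hvals (· ≠ 1) hne1 hne2 hne3 hne4 hne5) hi hj
  obtain ⟨U, hUo, hUne, hUQ, hU⟩ := (Lyness.hasOscillatingRegion_of_lt_one_lt
    (hper.add_const s) (fun n => hb (n + s)) (by rwa [zero_add]) (by rwa [add_comm])).of_shift hb s
  refine ⟨⟨U, hUo, hUne, hUQ, fun p hp x hx1 hx2 hx => ?_⟩, fun H => ?_⟩
  · have hy : Lyness.IsSolution b (fun n => x (n + 1)) := fun n => hx (n + 1) n.succ_pos
    have hosc := Lyness.Oscillates.of_comp_add (hy.eq_seq hx1 hx2 ▸ hU p hp)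
    exact ⟨fun ε hε => frequently_atTop.1 (hosc.1 ε hε), fun M => frequently_atTop.1 (hosc.2 M)⟩
  · obtain ⟨p, hp⟩ := hUne
    obtain ⟨c, C, -, -, hC⟩ := H (fun n => Lyness.seq b p (n - 1)) (hUQ hp).1 (hUQ hp).2
      (fun n hn => by obtain ⟨m, rfl⟩ := Nat.exists_eq_add_of_le' hn; rfl)
    obtain ⟨n, -, hn⟩ := frequently_atTop.1 ((hU p hp).2 C) 0
    exact (hC (n + 1) n.succ_pos).2.not_gt hn
end

section
/- Let a, b, c, d, e, f be positive real numbers and let (a_n) be the 6-periodic sequence with a_1 = a, a_2 = b, a_3 = c, a_4 = d, a_5 = e, a_6 = f. Then the recurrence x_{n+2} = (a_n + x_{n+1})/x_n is persistent: for every initial condition x_1 > 0, x_2 > 0 there exist constants 0 < m < M (depending on the initial condition) such that m < x_n < M for all n. -/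
/-!
For `6`-periodic coefficients the Lyness map admits a "shifting" invariant: a Laurent
polynomial `V(p, …, u; x, y)` in `x, y` with coefficients built from one period `p, …, u`,
such that one step of the recurrence turns `V` with coefficients `p, …, u` into `V` with the
cyclically shifted coefficients `q, …, u, p`. Along a solution the value of `V` at
`(x_n, x_{n+1})`, with the coefficients shifted `n` times, is therefore constant. All terms of
`V` are nonnegative, and `V` contains the terms `r x` and `u / x`, so this constant bounds
`x_n` above and away from `0`, uniformly in `n`.
-/

noncomputable def lynessInvariant (p q r s t u x y : ℝ) : ℝ :=
  r * x + u / x + p * t / x + p * u / (x * y) + t * y / x + (p + q * u) / y + s * y + q * x / y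

theorem lynessInvariant_step (p q r s t u x y : ℝ) (hx : x ≠ 0) (hy : y ≠ 0)
    (hpy : p + y ≠ 0) :
    lynessInvariant q r s t u p y ((p + y) / x) = lynessInvariant p q r s t u x y := by
  unfold lynessInvariant
  field_simp
  ring

theorem mul_le_lynessInvariant_and_le_lynessInvariant_mul {p q r s t u x y : ℝ}
    (hp : 0 ≤ p) (hq : 0 ≤ q) (hr : 0 ≤ r) (hs : 0 ≤ s) (ht : 0 ≤ t) (hu : 0 ≤ u)
    (hx : 0 < x) (hy : 0 < y) :
    r * x ≤ lynessInvariant p q r s t u x y ∧ u ≤ lynessInvariant p q r s t u x y * x := by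
  have hrest : 0 ≤ p * t / x + p * u / (x * y) + t * y / x + (p + q * u) / y + s * y
      + q * x / y := by positivity
  have hux : 0 ≤ u / x := by positivity
  have hrx : 0 ≤ r * x := by positivity
  unfold lynessInvariant
  refine ⟨by linarith, ?_⟩
  rw [← div_le_iff₀ hx]
  linarith

theorem Function.Periodic.exists_pos_le {α : ℕ → ℝ} {N : ℕ} (hper : Function.Periodic α N)
    (hN : 0 < N) (hpos : ∀ n, 0 < α n) : ∃ v, 0 < v ∧ ∀ n, v ≤ α n := by
  obtain ⟨i, -, hi⟩ := (Finset.range N).exists_min_image α ⟨0, Finset.mem_range.2 hN⟩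
  refine ⟨α i, hpos i, fun n => ?_⟩
  rw [← hper.map_mod_nat n]
  exact hi _ (Finset.mem_range.2 (Nat.mod_lt n hN))

section Solution

variable {α ξ : ℕ → ℝ}

theorem lyness_pos (hα : ∀ n, 0 < α n) (h0 : 0 < ξ 0) (h1 : 0 < ξ 1)
    (hrec : ∀ n, ξ (n + 2) = (α n + ξ (n + 1)) / ξ n) (n : ℕ) : 0 < ξ n := by
  induction n using Nat.twoStepInduction with
  | zero => exact h0
  | one => exact h1
  | more n ih0 ih1 => rw [hrec]; exact div_pos (add_pos (hα n) ih1) ih0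

theorem lynessInvariant_eq_of_periodic_six (hper : Function.Periodic α 6) (hα : ∀ n, 0 < α n)
    (hξ : ∀ n, 0 < ξ n) (hrec : ∀ n, ξ (n + 2) = (α n + ξ (n + 1)) / ξ n) (n : ℕ) :
    lynessInvariant (α n) (α (n + 1)) (α (n + 2)) (α (n + 3)) (α (n + 4)) (α (n + 5))
        (ξ n) (ξ (n + 1)) =
      lynessInvariant (α 0) (α 1) (α 2) (α 3) (α 4) (α 5) (ξ 0) (ξ 1) := by
  induction n with
  | zero => rfl
  | succ n ih =>
    rw [← ih, ← lynessInvariant_step _ _ _ _ _ _ _ _ (hξ n).ne' (hξ (n + 1)).ne'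
      (add_pos (hα n) (hξ (n + 1))).ne', ← hrec, ← hper n]

theorem lyness_persistent_of_periodic_six (hper : Function.Periodic α 6) (hα : ∀ n, 0 < α n)
    (h0 : 0 < ξ 0) (h1 : 0 < ξ 1) (hrec : ∀ n, ξ (n + 2) = (α n + ξ (n + 1)) / ξ n) :
    ∃ m M, 0 < m ∧ m < M ∧ ∀ n, m < ξ n ∧ ξ n < M := by
  obtain ⟨v, hv, hvα⟩ := hper.exists_pos_le (by norm_num) hα
  have hξ := lyness_pos hα h0 h1 hrec
  set K := lynessInvariant (α 0) (α 1) (α 2) (α 3) (α 4) (α 5) (ξ 0) (ξ 1)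
  have hbounds (n : ℕ) : v * ξ n ≤ K ∧ v ≤ K * ξ n := by
    obtain ⟨hup, hlow⟩ := mul_le_lynessInvariant_and_le_lynessInvariant_mul (hα n).le
      (hα (n + 1)).le (hα (n + 2)).le (hα (n + 3)).le (hα (n + 4)).le (hα (n + 5)).le
      (hξ n) (hξ (n + 1))
    rw [lynessInvariant_eq_of_periodic_six hper hα hξ hrec] at hup hlow
    exact ⟨(mul_le_mul_of_nonneg_right (hvα _) (hξ n).le).trans hup, (hvα _).trans hlow⟩
  have hK : 0 < K := pos_of_mul_pos_left (hv.trans_le (hbounds 0).2) (hξ 0).le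
  have hbound (n : ℕ) : v / (2 * K) < ξ n ∧ ξ n < 2 * K / v := by
    obtain ⟨hup, hlow⟩ := hbounds n
    constructor
    · rw [div_lt_iff₀ (by positivity)]; nlinarith [hξ n]
    · rw [lt_div_iff₀ hv]; nlinarith [hξ n]
  exact ⟨v / (2 * K), 2 * K / v, by positivity, (hbound 0).1.trans (hbound 0).2, hbound⟩

end Solution

/-- Proposition 14 of the paper (persistence for `k = 6`): for any `6`-periodic sequence
of positive coefficients, every solution of the Lyness recurrence
`x_{n+2} = (a_n + x_{n+1})/x_n` with positive initial conditions is bounded away from `0`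
and from `+∞`. -/
theorem lyness_six_periodic_persistent
    (a b c d e f : ℝ)
    (ha : 0 < a) (hb : 0 < b) (hc : 0 < c) (hd : 0 < d) (he : 0 < e) (hf : 0 < f)
    (A : ℕ → ℝ)
    (hA1 : A 1 = a) (hA2 : A 2 = b) (hA3 : A 3 = c)
    (hA4 : A 4 = d) (hA5 : A 5 = e) (hA6 : A 6 = f)
    (hAper : ∀ n, 1 ≤ n → A (n + 6) = A n) :
    ∀ x : ℕ → ℝ, 0 < x 1 → 0 < x 2 →
      (∀ n, 1 ≤ n → x (n + 2) = (A n + x (n + 1)) / x n) →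
      ∃ m M : ℝ, 0 < m ∧ m < M ∧ ∀ n, 1 ≤ n → m < x n ∧ x n < M := by
  intro x hx1 hx2 hrec
  have hper : Function.Periodic (fun k => A (k + 1)) 6 := fun k => by
    simpa only [add_right_comm] using hAper (k + 1) k.succ_pos
  have hpos (k : ℕ) : 0 < A (k + 1) := by
    rw [← hper.map_mod_nat k]
    have : k % 6 < 6 := Nat.mod_lt k (by norm_num)
    interval_cases k % 6 <;> simpa [hA1, hA2, hA3, hA4, hA5, hA6]
  obtain ⟨m, M, hm, hmM, hbound⟩ := lyness_persistent_of_periodic_six (ξ := fun k => x (k + 1))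
    hper hpos hx1 hx2 fun k => hrec (k + 1) k.succ_pos
  refine ⟨m, M, hm, hmM, fun n hn => ?_⟩
  obtain ⟨k, rfl⟩ := Nat.exists_eq_add_of_le' hn
  exact hbound k
end

section
/- Let a, b, c, d be positive real numbers. Then the composition map F_{d,c,b,a} = F_d ∘ F_c ∘ F_b ∘ F_a has exactly one fixed point in Q⁺; moreover, a point (x,y) ∈ Q⁺ satisfies F_{d,c,b,a}(x,y) = (x,y) if and only if x = y² + (a−c)y − d and y = x² + (d−b)x − a. -/
/-!
Along the orbit `(x, y) ↦ (y, z) ↦ (z, w) ↦ (w, u) ↦ (u, v)` a fixed point means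
`x z = a + y`, `y w = b + z`, `z x = c + w`, `w y = d + x`; comparing the first with the third
and the second with the fourth gives `w = y + a - c` and `z = x + d - b`, which turns the
system into the two quadratic equations. In the open quadrant these describe two increasing
curves `y = g(x)` and `x = h(y)`; they cross by the intermediate value theorem, and they cross
only once because subtracting two solutions would force
`x y = (x + d + y y') (y + a + x x') > x y`.
-/

theorem exists_pos_root_quadratic (γ : ℝ) {α : ℝ} (hα : 0 < α) :
    ∃ r, 0 < r ∧ r ^ 2 + γ * r - α = 0 ∧
      ∀ x, r ≤ x → (x - r) ^ 2 ≤ x ^ 2 + γ * x - α := by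
  set s := √(γ ^ 2 + 4 * α)
  have hs_sq : s ^ 2 = γ ^ 2 + 4 * α := Real.sq_sqrt (by positivity)
  have hs_nonneg : 0 ≤ s := Real.sqrt_nonneg _
  have hγs : γ < s := by nlinarith
  refine ⟨(s - γ) / 2, by linarith, by linear_combination hs_sq / 4, fun x hx => ?_⟩
  -- with `r = (s - γ) / 2`, the difference of the two sides is `s * (x - r)`
  nlinarith [mul_nonneg hs_nonneg (sub_nonneg.2 hx)]

theorem exists_pos_solution_quadratic_system (β γ : ℝ) {α δ : ℝ} (hα : 0 < α) (hδ : 0 < δ) :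
    ∃ x y : ℝ, 0 < x ∧ 0 < y ∧ x = y ^ 2 + β * y - δ ∧ y = x ^ 2 + γ * x - α := by
  obtain ⟨r, hr, hr_root, hr_le⟩ := exists_pos_root_quadratic γ hα
  obtain ⟨s, hs, -, hs_le⟩ := exists_pos_root_quadratic β hδ
  set g : ℝ → ℝ := fun x => x ^ 2 + γ * x - α with hg
  set f : ℝ → ℝ := fun x => g x ^ 2 + β * g x - δ - x with hf
  have hf_cont : Continuous f := by fun_prop
  have hfr : f r < 0 := by simp only [hf, hg, hr_root]; linarith
  -- so that `g M ≥ (M - r) ^ 2 ≥ 2 (M - r) = M + s + 2`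
  set M := 2 * r + s + 2
  have hgM : M + 2 ≤ g M - s := by nlinarith [hr_le M (by linarith)]
  have hfM : 0 ≤ f M := by nlinarith [hs_le (g M) (by linarith)]
  obtain ⟨x, ⟨hrx, -⟩, hfx⟩ :=
    intermediate_value_Icc (by linarith : r ≤ M) hf_cont.continuousOn ⟨hfr.le, hfM⟩
  have hrx' : r < x := hrx.lt_of_ne (by rintro rfl; linarith)
  have hgx : 0 < g x := by nlinarith [hr_le x hrx]
  exact ⟨x, g x, by linarith, hgx, by simp only [hf] at hfx; linarith, rfl⟩

theorem eq_of_pos_solutions_quadratic_system {α β γ δ x y x' y' : ℝ} (hα : 0 ≤ α) (hδ : 0 ≤ δ)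
    (hx : 0 < x) (hy : 0 < y) (hx' : 0 < x') (hy' : 0 < y')
    (h₁ : x = y ^ 2 + β * y - δ) (h₂ : y = x ^ 2 + γ * x - α)
    (h₁' : x' = y' ^ 2 + β * y' - δ) (h₂' : y' = x' ^ 2 + γ * x' - α) :
    x = x' ∧ y = y' := by
  have hx_sub : x - x' = (y - y') * (y + y' + β) := by linear_combination h₁ - h₁'
  have hy_sub : y - y' = (x - x') * (x + x' + γ) := by linear_combination h₂ - h₂'
  suffices hxx : x = x' by
    refine ⟨hxx, ?_⟩
    linear_combination hy_sub + (x + x' + γ) * hxx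
  by_contra hne
  have hprod : (y + y' + β) * (x + x' + γ) = 1 :=
    mul_left_cancel₀ (sub_ne_zero.2 hne) (by linear_combination -hx_sub - (y + y' + β) * hy_sub)
  have : x * y < x * y :=
    calc x * y < (x + δ + y * y') * (y + α + x * x') :=
          mul_lt_mul'' (by nlinarith [mul_pos hy hy']) (by nlinarith [mul_pos hx hx'])
            hx.le hy.le
      _ = x * y * ((y + y' + β) * (x + x' + γ)) := by
          linear_combination (y + α + x * x') * h₁ + y * (y + y' + β) * h₂
      _ = x * y := by rw [hprod, mul_one]
  exact lt_irrefl _ this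

theorem lyness_four_comp_fixed_iff {a d x y : ℝ} (b c : ℝ) (ha : 0 < a) (hd : 0 < d)
    (hx : 0 < x) (hy : 0 < y) :
    (lyness d ∘ lyness c ∘ lyness b ∘ lyness a) (x, y) = (x, y) ↔
      x = y ^ 2 + (a - c) * y - d ∧ y = x ^ 2 + (d - b) * x - a := by
  set z := (a + y) / x
  set w := (b + z) / y
  have hz : x * z = a + y := mul_div_cancel₀ _ hx.ne'
  have hw : y * w = b + z := mul_div_cancel₀ _ hy.ne'
  have hcomp : (lyness d ∘ lyness c ∘ lyness b ∘ lyness a) (x, y) =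
      ((c + w) / z, (d + (c + w) / z) / w) := rfl
  rw [hcomp, Prod.mk.injEq]
  constructor
  · rintro ⟨hu, hv⟩
    have hz0 : z ≠ 0 := (div_ne_zero_iff.mp (hu ▸ hx.ne')).2
    have hw0 : w ≠ 0 := (div_ne_zero_iff.mp (hv ▸ hy.ne')).2
    rw [hu, div_eq_iff hw0] at hv
    rw [div_eq_iff hz0] at hu
    constructor
    · linear_combination hv + y * (hu + hz)
    · linear_combination -hz - x * (hv + hw)
  · rintro ⟨h₁, h₂⟩
    have hz_eq : z = x + d - b := mul_left_cancel₀ hx.ne' (by linear_combination hz + h₂)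
    have hw_eq : w = y + a - c := mul_left_cancel₀ hy.ne' (by linear_combination hw + hz_eq + h₁)
    have hz0 : z ≠ 0 := by rintro h; rw [h, mul_zero] at hz; linarith
    have hw0 : w ≠ 0 := by rintro h; rw [h, mul_zero] at hw; linarith
    have hu : (c + w) / z = x := by
      rw [div_eq_iff hz0]; linear_combination hw_eq - hz
    refine ⟨hu, ?_⟩
    rw [hu, div_eq_iff hw0]
    linear_combination -(hw + hz_eq)

theorem lyness_four_composition_unique_fixed_point_general
    (a b c d : ℝ) (ha : 0 < a) (hd : 0 < d) :
    (∃! p : ℝ × ℝ, 0 < p.1 ∧ 0 < p.2 ∧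
        (lyness d ∘ lyness c ∘ lyness b ∘ lyness a) p = p) ∧
    (∀ x y : ℝ, 0 < x → 0 < y →
        ((lyness d ∘ lyness c ∘ lyness b ∘ lyness a) (x, y) = (x, y) ↔
          x = y ^ 2 + (a - c) * y - d ∧ y = x ^ 2 + (d - b) * x - a)) := by
  have hfix (x y : ℝ) (hx : 0 < x) (hy : 0 < y) := lyness_four_comp_fixed_iff b c ha hd hx hy
  refine ⟨?_, hfix⟩
  obtain ⟨x, y, hx, hy, h₁, h₂⟩ := exists_pos_solution_quadratic_system (a - c) (d - b) ha hd
  refine ⟨(x, y), ⟨hx, hy, (hfix x y hx hy).2 ⟨h₁, h₂⟩⟩, ?_⟩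
  rintro ⟨x', y'⟩ ⟨hx', hy', hp⟩
  obtain ⟨h₁', h₂'⟩ := (hfix x' y' hx' hy').1 hp
  obtain ⟨rfl, rfl⟩ :=
    eq_of_pos_solutions_quadratic_system ha.le hd.le hx' hy' hx hy h₁' h₂' h₁ h₂
  rfl

/-- Lemma 10 (i) of the paper: the composition map `F_{d,c,b,a} = F_d ∘ F_c ∘ F_b ∘ F_a`
has exactly one fixed point in the open first quadrant, and a point `(x,y)` of the open
first quadrant is fixed if and only if `x = y² + (a−c)y − d` and `y = x² + (d−b)x − a`. -/
theorem lyness_four_composition_unique_fixed_point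
    (a b c d : ℝ) (ha : 0 < a) (hb : 0 < b) (hc : 0 < c) (hd : 0 < d) :
    (∃! p : ℝ × ℝ, 0 < p.1 ∧ 0 < p.2 ∧
        (lyness d ∘ lyness c ∘ lyness b ∘ lyness a) p = p) ∧
    (∀ x y : ℝ, 0 < x → 0 < y →
        ((lyness d ∘ lyness c ∘ lyness b ∘ lyness a) (x, y) = (x, y) ↔
          x = y ^ 2 + (a - c) * y - d ∧ y = x ^ 2 + (d - b) * x - a)) :=
  lyness_four_composition_unique_fixed_point_general a b c d ha hd
end

section
/- Let a, b, c, d, e be positive real numbers. A point (x,y) ∈ Q⁺ is a fixed point of the composition map F_{e,d,c,b,a} = F_e ∘ F_d ∘ F_c ∘ F_b ∘ F_a if and only if (b−1)x + (1−d)y + (a−e) = 0 and c·x·y − (e+x)(a+y) + b·x + y + a = 0. Consequently, the set of fixed points of F_{e,d,c,b,a} in Q⁺ either has at most two elements or is infinite. -/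
open Filter Topology Set

theorem Set.infinite_of_injective_of_eventually_mem {X α : Type*} [TopologicalSpace X]
    [T1Space X] {f : X → α} {S : Set α} {t₀ : X} [(𝓝[≠] t₀).NeBot]
    (hf : Function.Injective f) (hS : ∀ᶠ t in 𝓝 t₀, f t ∈ S) : S.Infinite :=
  ((infinite_of_mem_nhds t₀ hS).image hf.injOn).mono (image_preimage_subset f S)

theorem Set.ncard_le_two_or_infinite {α : Type*} {S : Set α}
    (h : ∀ p₁ ∈ S, ∀ p₂ ∈ S, ∀ p₃ ∈ S, p₁ ≠ p₂ → p₁ ≠ p₃ → p₂ ≠ p₃ → S.Infinite) :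
    S.ncard ≤ 2 ∨ S.Infinite := by
  refine S.finite_or_infinite.imp (fun hfin => ?_) id
  by_contra! h₂
  obtain ⟨p₁, h₁, p₂, h₂, p₃, h₃, h₁₂, h₁₃, h₂₃⟩ := (Set.two_lt_ncard hfin).mp h₂
  exact h p₁ h₁ p₂ h₂ p₃ h₃ h₁₂ h₁₃ h₂₃ hfin

theorem eventually_mem_quadrant {f : ℝ → ℝ × ℝ} {t₀ : ℝ} (hf : ContinuousAt f t₀)
    (h₁ : 0 < (f t₀).1) (h₂ : 0 < (f t₀).2) : ∀ᶠ t in 𝓝 t₀, 0 < (f t).1 ∧ 0 < (f t).2 :=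
  hf.eventually ((isOpen_Ioi.prod isOpen_Ioi).mem_nhds ⟨h₁, h₂⟩)

theorem lyness_five_comp_apply_eq_self_iff {a b c d e x y : ℝ} (ha : 0 < a) (hb : 0 < b)
    (hc : 0 < c) (hx : 0 < x) (hy : 0 < y) :
    (lyness e ∘ lyness d ∘ lyness c ∘ lyness b ∘ lyness a) (x, y) = (x, y) ↔
      (b - 1) * x + (1 - d) * y + (a - e) = 0 ∧
        c * x * y - (e + x) * (a + y) + b * x + y + a = 0 := by
  set z₃ := (a + y) / x with hz₃
  set z₄ := (b + z₃) / y with hz₄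
  set z₅ := (c + z₄) / z₃ with hz₅
  have hz₄_pos : 0 < z₄ := by positivity
  have hz₅_pos : 0 < z₅ := by positivity
  have hfix : (lyness e ∘ lyness d ∘ lyness c ∘ lyness b ∘ lyness a) (x, y) = (x, y) ↔
      d + z₅ = x * z₄ ∧ e + x = y * z₅ := by
    show ((d + z₅) / z₄, (e + (d + z₅) / z₄) / z₅) = (x, y) ↔ _
    rw [Prod.mk.injEq, div_eq_iff hz₄_pos.ne', div_eq_iff hz₅_pos.ne']
    refine and_congr_right fun h₁ => ?_
    rw [h₁, mul_div_cancel_right₀ _ hz₄_pos.ne', mul_comm]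
  have k₄ : x * y * z₄ = b * x + a + y := by
    rw [hz₄, hz₃]; field_simp; ring
  have k₅ : y * (a + y) * z₅ = c * x * y + b * x + a + y := by
    rw [hz₅, hz₄, hz₃]; field_simp; ring
  clear_value z₃ z₄ z₅
  have hQ : c * x * y - (e + x) * (a + y) + b * x + y + a = (a + y) * (y * z₅ - (e + x)) := by
    linear_combination -k₅
  have h₂_iff : e + x = y * z₅ ↔ c * x * y - (e + x) * (a + y) + b * x + y + a = 0 := by
    rw [hQ, mul_eq_zero, or_iff_right (by positivity), sub_eq_zero, eq_comm]
  rw [hfix, h₂_iff]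
  refine and_congr_left fun hQ₀ => ?_
  have hL : (b - 1) * x + (1 - d) * y + (a - e) = y * (x * z₄ - (d + z₅)) := by
    linear_combination -k₄ - h₂_iff.mpr hQ₀
  rw [hL, mul_eq_zero, or_iff_right hy.ne', sub_eq_zero, eq_comm]

def lynessLine (a b d e : ℝ) (p : ℝ × ℝ) : ℝ := (b - 1) * p.1 + (1 - d) * p.2 + (a - e)

def lynessConic (a b c e : ℝ) (p : ℝ × ℝ) : ℝ :=
  c * p.1 * p.2 - (e + p.1) * (a + p.2) + b * p.1 + p.2 + a

def lynessLocus (a b c d e : ℝ) : Set (ℝ × ℝ) :=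
  {p | 0 < p.1 ∧ 0 < p.2 ∧ lynessLine a b d e p = 0 ∧ lynessConic a b c e p = 0}

theorem lynessLine_eq_zero_iff_exists_eq_add_smul {a b d e : ℝ} {p₀ p : ℝ × ℝ}
    (hv : ((d - 1, b - 1) : ℝ × ℝ) ≠ 0) (h₀ : lynessLine a b d e p₀ = 0) :
    lynessLine a b d e p = 0 ↔ ∃ t : ℝ, p = p₀ + t • ((d - 1, b - 1) : ℝ × ℝ) := by
  unfold lynessLine at h₀ ⊢
  constructor
  · intro h
    have hn : (d - 1) ^ 2 + (b - 1) ^ 2 ≠ 0 := by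
      intro hsq
      rw [add_eq_zero_iff_of_nonneg (sq_nonneg _) (sq_nonneg _), sq_eq_zero_iff,
        sq_eq_zero_iff] at hsq
      exact hv (Prod.ext hsq.1 hsq.2)
    refine ⟨((p.1 - p₀.1) * (d - 1) + (p.2 - p₀.2) * (b - 1)) / ((d - 1) ^ 2 + (b - 1) ^ 2),
      Prod.ext ?_ ?_⟩ <;> simp only [Prod.fst_add, Prod.snd_add, Prod.smul_fst, Prod.smul_snd,
        smul_eq_mul] <;> field_simp
    · linear_combination (b - 1) * (h - h₀)
    · linear_combination (1 - d) * (h - h₀)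
  · rintro ⟨t, rfl⟩
    simp only [Prod.fst_add, Prod.snd_add, Prod.smul_fst, Prod.smul_snd, smul_eq_mul]
    linear_combination h₀

theorem lynessLocus_infinite_of_three_mem {a b c d e : ℝ} (hv : ((d - 1, b - 1) : ℝ × ℝ) ≠ 0)
    {p₁ p₂ p₃ : ℝ × ℝ} (h₁ : p₁ ∈ lynessLocus a b c d e) (h₂ : p₂ ∈ lynessLocus a b c d e)
    (h₃ : p₃ ∈ lynessLocus a b c d e) (h₁₂ : p₁ ≠ p₂) (h₁₃ : p₁ ≠ p₃) (h₂₃ : p₂ ≠ p₃) :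
    (lynessLocus a b c d e).Infinite := by
  obtain ⟨hx₁, hy₁, hL₁, hQ₁⟩ := h₁
  have on_line := fun p (hp : p ∈ lynessLocus a b c d e) =>
    (lynessLine_eq_zero_iff_exists_eq_add_smul hv hL₁).mp hp.2.2.1
  obtain ⟨A, B, along⟩ : ∃ A B : ℝ, ∀ t : ℝ,
      lynessConic a b c e (p₁ + t • ((d - 1, b - 1) : ℝ × ℝ)) = t * (A * t + B) := by
    refine ⟨(c - 1) * (d - 1) * (b - 1), c * (p₁.1 * (b - 1) + p₁.2 * (d - 1))
      - (d - 1) * (a + p₁.2) - (b - 1) * (e + p₁.1) + b * (d - 1) + (b - 1), fun t => ?_⟩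
    unfold lynessConic at hQ₁ ⊢
    simp only [Prod.fst_add, Prod.snd_add, Prod.smul_fst, Prod.smul_snd, smul_eq_mul]
    linear_combination hQ₁
  have root_of_mem : ∀ t ≠ 0, p₁ + t • ((d - 1, b - 1) : ℝ × ℝ) ∈ lynessLocus a b c d e →
      A * t + B = 0 := fun t ht hp =>
    (mul_eq_zero.mp ((along t).symm.trans hp.2.2.2)).resolve_left ht
  obtain ⟨t₂, rfl⟩ := on_line p₂ h₂
  obtain ⟨t₃, rfl⟩ := on_line p₃ h₃
  have ht₂ : t₂ ≠ 0 := by rintro rfl; simp at h₁₂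
  have ht₃ : t₃ ≠ 0 := by rintro rfl; simp at h₁₃
  have ht₂₃ : t₂ - t₃ ≠ 0 := sub_ne_zero.mpr (by rintro rfl; exact h₂₃ rfl)
  have hA₂ := root_of_mem t₂ ht₂ h₂
  have hA : A = 0 := (mul_eq_zero.mp (by linear_combination hA₂ - root_of_mem t₃ ht₃ h₃ :
    A * (t₂ - t₃) = 0)).resolve_right ht₂₃
  have hB : B = 0 := by linear_combination hA₂ - t₂ * hA
  refine Set.infinite_of_injective_of_eventually_mem (t₀ := 0)
    ((add_right_injective p₁).comp (smul_left_injective ℝ hv)) ?_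
  filter_upwards [eventually_mem_quadrant (f := fun t : ℝ => p₁ + t • ((d - 1, b - 1) : ℝ × ℝ))
    (by fun_prop) (by simpa) (by simpa)] with t ⟨hx, hy⟩
  exact ⟨hx, hy, (lynessLine_eq_zero_iff_exists_eq_add_smul hv hL₁).mpr ⟨t, rfl⟩,
    by rw [Function.comp_apply, along, hA, hB]; ring⟩

theorem lynessLocus_one_one_infinite_of_mem {a c e : ℝ} (ha : 0 < a) {p : ℝ × ℝ}
    (hp : p ∈ lynessLocus a 1 c 1 e) : (lynessLocus a 1 c 1 e).Infinite := by
  obtain ⟨hx, hy, hL, hQ⟩ := hp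
  obtain rfl : a = e := by unfold lynessLine at hL; linarith
  have line_eq : ∀ q, lynessLine a 1 1 a q = 0 := fun q => by unfold lynessLine; ring
  have conic_eq : ∀ q : ℝ × ℝ, lynessConic a 1 c a q =
      q.2 * ((c - 1) * q.1 + (1 - a)) - (a - 1) * (q.1 + a) := fun q => by
    unfold lynessConic; ring
  rw [conic_eq] at hQ
  by_cases hD : (c - 1) * p.1 + (1 - a) = 0
  · obtain rfl : a = 1 := by
      rw [hD, mul_zero, zero_sub, neg_eq_zero, mul_eq_zero, sub_eq_zero] at hQ
      exact hQ.resolve_right (by positivity)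
    obtain rfl : c = 1 := by
      rw [sub_self, add_zero, mul_eq_zero, sub_eq_zero] at hD
      exact hD.resolve_right hx.ne'
    refine Set.infinite_of_injective_of_eventually_mem (f := fun x => (x, p.2)) (t₀ := p.1)
      (fun x y h => congrArg Prod.fst h) ?_
    filter_upwards [lt_mem_nhds hx] with x hx
    exact ⟨hx, hy, line_eq _, by rw [conic_eq]; ring⟩
  · set φ : ℝ → ℝ := fun x => (a - 1) * (x + a) / ((c - 1) * x + (1 - a)) with hφ
    have hφ₁ : φ p.1 = p.2 := by rw [hφ, div_eq_iff hD]; linear_combination -hQ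
    have hcont : ContinuousAt (fun x => (x, φ x)) p.1 := by
      rw [hφ]; fun_prop (disch := exact hD)
    refine Set.infinite_of_injective_of_eventually_mem (f := fun x => (x, φ x)) (t₀ := p.1)
      (fun x y h => congrArg Prod.fst h) ?_
    have hD_cont : Continuous fun x : ℝ => (c - 1) * x + (1 - a) := by fun_prop
    filter_upwards [eventually_mem_quadrant hcont hx (hφ₁ ▸ hy),
      hD_cont.continuousAt.eventually_ne hD] with x ⟨hx, hy⟩ hDx
    exact ⟨hx, hy, line_eq _, by rw [conic_eq, div_mul_cancel₀ _ hDx, sub_self]⟩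

theorem lynessLocus_ncard_le_two_or_infinite {a b c d e : ℝ} (ha : 0 < a) :
    (lynessLocus a b c d e).ncard ≤ 2 ∨ (lynessLocus a b c d e).Infinite := by
  refine Set.ncard_le_two_or_infinite fun p₁ h₁ p₂ h₂ p₃ h₃ h₁₂ h₁₃ h₂₃ => ?_
  by_cases hv : ((d - 1, b - 1) : ℝ × ℝ) = 0
  · obtain ⟨hd, hb⟩ := Prod.mk_eq_zero.mp hv
    obtain rfl : d = 1 := sub_eq_zero.mp hd
    obtain rfl : b = 1 := sub_eq_zero.mp hb
    exact lynessLocus_one_one_infinite_of_mem ha h₁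
  · exact lynessLocus_infinite_of_three_mem hv h₁ h₂ h₃ h₁₂ h₁₃ h₂₃

theorem lyness_five_composition_fixed_points_general
    (a b c d e : ℝ) (ha : 0 < a) (hb : 0 < b) (hc : 0 < c) :
    (∀ x y : ℝ, 0 < x → 0 < y →
        ((lyness e ∘ lyness d ∘ lyness c ∘ lyness b ∘ lyness a) (x, y) = (x, y) ↔
          (b - 1) * x + (1 - d) * y + (a - e) = 0 ∧
            c * x * y - (e + x) * (a + y) + b * x + y + a = 0)) ∧
    ({p : ℝ × ℝ | 0 < p.1 ∧ 0 < p.2 ∧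
          (lyness e ∘ lyness d ∘ lyness c ∘ lyness b ∘ lyness a) p = p}.ncard ≤ 2 ∨
      {p : ℝ × ℝ | 0 < p.1 ∧ 0 < p.2 ∧
          (lyness e ∘ lyness d ∘ lyness c ∘ lyness b ∘ lyness a) p = p}.Infinite) := by
  have fixed_iff := fun x y (hx : 0 < x) (hy : 0 < y) =>
    lyness_five_comp_apply_eq_self_iff (d := d) (e := e) ha hb hc hx hy
  have fixed_set_eq : {p : ℝ × ℝ | 0 < p.1 ∧ 0 < p.2 ∧
      (lyness e ∘ lyness d ∘ lyness c ∘ lyness b ∘ lyness a) p = p} = lynessLocus a b c d e := by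
    ext ⟨x, y⟩
    exact and_congr_right fun hx => and_congr_right fun hy => fixed_iff x y hx hy
  rw [fixed_set_eq]
  exact ⟨fixed_iff, lynessLocus_ncard_le_two_or_infinite ha⟩

/-- Lemma 10 (ii) of the paper: a point `(x,y)` of the open first quadrant is a fixed
point of `F_{e,d,c,b,a} = F_e ∘ F_d ∘ F_c ∘ F_b ∘ F_a` if and only if
`(b−1)x + (1−d)y + (a−e) = 0` and `cxy − (e+x)(a+y) + bx + y + a = 0`; consequently the
set of such fixed points has at most two elements or is infinite. -/
theorem lyness_five_composition_fixed_points
    (a b c d e : ℝ) (ha : 0 < a) (hb : 0 < b) (hc : 0 < c) (hd : 0 < d) (he : 0 < e) :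
    (∀ x y : ℝ, 0 < x → 0 < y →
        ((lyness e ∘ lyness d ∘ lyness c ∘ lyness b ∘ lyness a) (x, y) = (x, y) ↔
          (b - 1) * x + (1 - d) * y + (a - e) = 0 ∧
            c * x * y - (e + x) * (a + y) + b * x + y + a = 0)) ∧
    ({p : ℝ × ℝ | 0 < p.1 ∧ 0 < p.2 ∧
          (lyness e ∘ lyness d ∘ lyness c ∘ lyness b ∘ lyness a) p = p}.ncard ≤ 2 ∨
      {p : ℝ × ℝ | 0 < p.1 ∧ 0 < p.2 ∧
          (lyness e ∘ lyness d ∘ lyness c ∘ lyness b ∘ lyness a) p = p}.Infinite) :=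
  lyness_five_composition_fixed_points_general a b c d e ha hb hc
end

section
/- Let a, b, c, d, e, f be positive real numbers and let V_{f,e,d,c,b,a}(x,y) = (af + (a+bf)x + (f+ae)y + bx² + ey² + cx²y + dxy²)/(xy) on Q⁺. For a point (x,y) ∈ Q⁺ the following three conditions are equivalent: (1) (x,y) is a fixed point of the composition map F_{f,e,d,c,b,a} = F_f ∘ F_e ∘ F_d ∘ F_c ∘ F_b ∘ F_a; (2) both partial derivatives of V_{f,e,d,c,b,a} vanish at (x,y); (3) y²·(e+dx) = (f+x)(a+bx) and x²·(b+cy) = (a+y)(f+ey). Moreover, F_{f,e,d,c,b,a} has at least one fixed point in Q⁺. -/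
/-!
Writing `F_{f,e,d,c,b,a} = (F_f ∘ F_e) ∘ (F_d ∘ F_c ∘ F_b ∘ F_a)`, a point is fixed exactly when
the forward orbit of `(x, y)` under `F_a, F_b, F_c, F_d` meets its backward orbit under
`F_f, F_e`; after clearing denominators this is the pair of polynomial equations.
For fixed `y`, `V(·, y)` has the form `A / x + B + C x`, whose critical point is `C x² = A`,
which is the second equation; the first follows from the symmetry
`V_{f,e,d,c,b,a}(x, y) = V_{a,b,c,d,e,f}(y, x)`.
For existence, follow the branch `y = g(x)` of the first curve and apply the intermediate
value theorem to the second equation along it: it is negative at `x = 0` and, since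
`g(x)² = O(x)`, positive for large `x`.
-/

open Set Topology

/-- The inverse of `lyness a` on `{q | q.2 ≠ 0}`. -/
noncomputable def lynessInv (a : ℝ) (q : ℝ × ℝ) : ℝ × ℝ := ((a + q.1) / q.2, q.1)

section LynessMap

variable {a : ℝ} {p q : ℝ × ℝ}

theorem lyness_eq_iff_eq_lynessInv (hp : p.1 ≠ 0) (hq : q.2 ≠ 0) :
    lyness a p = q ↔ p = lynessInv a q := by
  obtain ⟨x, y⟩ := p
  obtain ⟨u, v⟩ := q
  simp only [lyness, lynessInv, Prod.mk.injEq] at *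
  rw [div_eq_iff hp, eq_div_iff hq]
  constructor
  · rintro ⟨rfl, h⟩; exact ⟨by linarith, rfl⟩
  · rintro ⟨h, rfl⟩; exact ⟨rfl, by linarith⟩

theorem lyness_mapsTo (ha : 0 ≤ a) :
    MapsTo (lyness a) (Ioi 0 ×ˢ Ioi 0) (Ioi 0 ×ˢ Ioi 0) := by
  rintro ⟨x, y⟩ ⟨hx, hy⟩
  simp only [mem_Ioi] at hx hy
  exact ⟨hy, show 0 < (a + y) / x by positivity⟩

end LynessMap

section FixedPoints

variable {a b c d e f x y : ℝ}

theorem lyness_comp_six_eq_self_iff_eq_lynessInv (ha : 0 ≤ a) (hb : 0 ≤ b) (hc : 0 ≤ c)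
    (hd : 0 ≤ d) (he : 0 ≤ e) (hx : 0 < x) (hy : 0 < y) :
    (lyness f ∘ lyness e ∘ lyness d ∘ lyness c ∘ lyness b ∘ lyness a) (x, y) = (x, y) ↔
      (lyness d ∘ lyness c ∘ lyness b ∘ lyness a) (x, y) = lynessInv e (lynessInv f (x, y)) := by
  set z := (lyness d ∘ lyness c ∘ lyness b ∘ lyness a) (x, y)
  have hz : z ∈ Ioi 0 ×ˢ Ioi 0 :=
    ((lyness_mapsTo hd).comp <| (lyness_mapsTo hc).comp <| (lyness_mapsTo hb).comp <|
      lyness_mapsTo ha) ⟨hx, hy⟩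
  have hez := lyness_mapsTo he hz
  change lyness f (lyness e z) = (x, y) ↔ _
  rw [lyness_eq_iff_eq_lynessInv (ne_of_gt hez.1) hy.ne',
    lyness_eq_iff_eq_lynessInv (ne_of_gt hz.1) hx.ne']

theorem lyness_lyness_eq_iff {u v p q : ℝ} (hu : u ≠ 0) (hv : v ≠ 0) :
    lyness d (lyness c (u, v)) = (p, q) ↔ u * p = c + v ∧ v * q = d + p := by
  simp only [lyness, Prod.mk.injEq]
  constructor
  · rintro ⟨rfl, h⟩
    rw [div_eq_iff hv] at h
    exact ⟨by field_simp, by linarith⟩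
  · rintro ⟨h, h'⟩
    have hp : (c + v) / u = p := by rw [div_eq_iff hu]; linarith
    rw [hp, div_eq_iff hv]
    exact ⟨rfl, by linarith⟩

theorem lyness_comp_four_eq_lynessInv_iff (ha : 0 ≤ a) (hb : 0 ≤ b) (hx : 0 < x) (hy : 0 < y) :
    (lyness d ∘ lyness c ∘ lyness b ∘ lyness a) (x, y) = lynessInv e (lynessInv f (x, y)) ↔
      y ^ 2 * (e + d * x) = (f + x) * (a + b * x) ∧
        x ^ 2 * (b + c * y) = (a + y) * (f + e * y) := by
  have hu : (a + y) / x ≠ 0 := by positivity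
  have hv : (b + (a + y) / x) / y ≠ 0 := by positivity
  change lyness d (lyness c ((a + y) / x, (b + (a + y) / x) / y)) =
    ((e + (f + x) / y) / x, (f + x) / y) ↔ _
  rw [lyness_lyness_eq_iff hu hv, and_comm]
  field_simp
  refine and_congr ⟨fun h ↦ ?_, fun h ↦ ?_⟩ ⟨fun h ↦ ?_, fun h ↦ ?_⟩ <;> linear_combination -h

theorem lyness_comp_six_eq_self_iff (ha : 0 ≤ a) (hb : 0 ≤ b) (hc : 0 ≤ c) (hd : 0 ≤ d)
    (he : 0 ≤ e) (hx : 0 < x) (hy : 0 < y) :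
    (lyness f ∘ lyness e ∘ lyness d ∘ lyness c ∘ lyness b ∘ lyness a) (x, y) = (x, y) ↔
      y ^ 2 * (e + d * x) = (f + x) * (a + b * x) ∧
        x ^ 2 * (b + c * y) = (a + y) * (f + e * y) :=
  (lyness_comp_six_eq_self_iff_eq_lynessInv ha hb hc hd he hx hy).trans
    (lyness_comp_four_eq_lynessInv_iff ha hb hx hy)

end FixedPoints

theorem deriv_div_add_const_add_mul_eq_zero_iff {A B C x : ℝ} (hx : x ≠ 0) :
    deriv (fun s ↦ A / s + B + C * s) x = 0 ↔ C * x ^ 2 = A := by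
  have h : HasDerivAt (fun s ↦ A / s + B + C * s) (-(A / x ^ 2) + C) x := by
    simpa [div_eq_mul_inv] using
      (((hasDerivAt_inv hx).const_mul A).add_const B).fun_add ((hasDerivAt_id' x).const_mul C)
  rw [h.deriv, neg_add_eq_zero, div_eq_iff (by positivity), eq_comm]

section Potential

variable (a b c d e f : ℝ) {x y : ℝ}

theorem lynessV_swap (x y : ℝ) : lynessV a b c d e f x y = lynessV f e d c b a y x := by
  simp only [lynessV]
  ring

theorem lynessV_eq (hx : x ≠ 0) (hy : y ≠ 0) :
    lynessV a b c d e f x y =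
      (a + y) * (f + e * y) / y / x + (a + b * f + d * y ^ 2) / y + (b + c * y) / y * x := by
  simp only [lynessV]
  field_simp
  ring

theorem deriv_lynessV_fst_eq_zero_iff (hx : x ≠ 0) (hy : y ≠ 0) :
    deriv (fun s ↦ lynessV a b c d e f s y) x = 0 ↔
      x ^ 2 * (b + c * y) = (a + y) * (f + e * y) := by
  have hV : (fun s ↦ lynessV a b c d e f s y) =ᶠ[𝓝 x] fun s ↦
      (a + y) * (f + e * y) / y / s + (a + b * f + d * y ^ 2) / y + (b + c * y) / y * s :=
    (eventually_ne_nhds hx).mono fun s hs ↦ lynessV_eq a b c d e f hs hy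
  rw [hV.deriv_eq, deriv_div_add_const_add_mul_eq_zero_iff hx]
  field_simp

theorem deriv_lynessV_snd_eq_zero_iff (hx : x ≠ 0) (hy : y ≠ 0) :
    deriv (fun s ↦ lynessV a b c d e f x s) y = 0 ↔
      y ^ 2 * (e + d * x) = (f + x) * (a + b * x) := by
  simp_rw [lynessV_swap a b c d e f x]
  exact deriv_lynessV_fst_eq_zero_iff f e d c b a hy hx

end Potential

section Existence

variable {a b c d e f : ℝ}

theorem add_mul_add_lt_mul_sq_of_sq_mul_eq {t y : ℝ} (ha : 0 ≤ a) (hb : 0 ≤ b) (hd : 0 < d)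
    (he : 0 ≤ e) (hf : 0 ≤ f) (ht : 1 ≤ t)
    (hcurve : y ^ 2 * (e + d * t) = (f + t) * (a + b * t))
    (hlarge : (a * f + a * e + f) * d + (a * e + f + e) * ((f + 1) * (a + b)) < b * d * t) :
    (a + y) * (f + e * y) < b * t ^ 2 := by
  have hprod : (a + y) * (f + e * y) ≤ (a * f + a * e + f) + (a * e + f + e) * y ^ 2 := by
    have h : y ≤ 1 + y ^ 2 := by nlinarith [sq_nonneg (y - 1)]
    nlinarith [mul_le_mul_of_nonneg_left h (add_nonneg (mul_nonneg ha he) hf)]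
  have hdy : d * y ^ 2 ≤ (f + 1) * (a + b) * t := by
    have h : d * t * y ^ 2 ≤ (f + 1) * (a + b) * t * t := by
      nlinarith [mul_nonneg he (sq_nonneg y), mul_le_mul (show f + t ≤ (f + 1) * t by nlinarith)
        (show a + b * t ≤ (a + b) * t by nlinarith) (by positivity) (by positivity)]
    nlinarith
  have hd_mul : d * ((a + y) * (f + e * y)) < d * (b * t ^ 2) := by
    calc d * ((a + y) * (f + e * y))
        ≤ d * (a * f + a * e + f) + (a * e + f + e) * (d * y ^ 2) := by nlinarith
      _ ≤ (a * f + a * e + f) * d * t + (a * e + f + e) * ((f + 1) * (a + b) * t) := by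
          have hK0 : 0 ≤ (a * f + a * e + f) * d := by positivity
          have hK1 : 0 ≤ a * e + f + e := by positivity
          nlinarith [mul_le_mul_of_nonneg_left ht hK0, mul_le_mul_of_nonneg_left hdy hK1]
      _ < b * d * t * t := by nlinarith
      _ = d * (b * t ^ 2) := by ring
  exact lt_of_mul_lt_mul_left hd_mul hd.le

theorem exists_pos_sq_mul_eq_and_sq_mul_eq (ha : 0 < a) (hb : 0 < b) (hc : 0 ≤ c) (hd : 0 < d)
    (he : 0 < e) (hf : 0 < f) :
    ∃ x y : ℝ, 0 < x ∧ 0 < y ∧ y ^ 2 * (e + d * x) = (f + x) * (a + b * x) ∧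
      x ^ 2 * (b + c * y) = (a + y) * (f + e * y) := by
  set g : ℝ → ℝ := fun t ↦ √((f + t) * (a + b * t) / (e + d * t))
  have hg_pos : ∀ t, 0 ≤ t → 0 < g t := fun t ht ↦ Real.sqrt_pos.2 (by positivity)
  have hg_sq : ∀ t, 0 ≤ t → g t ^ 2 * (e + d * t) = (f + t) * (a + b * t) := fun t ht ↦ by
    rw [Real.sq_sqrt (by positivity), div_mul_cancel₀ _ (by positivity)]
  set H : ℝ → ℝ := fun t ↦ t ^ 2 * (b + c * g t) - (a + g t) * (f + e * g t)
  have hH_cont : ContinuousOn H (Ici 0) := by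
    have : ContinuousOn g (Ici 0) := by
      fun_prop (disch := intro t (ht : 0 ≤ t); positivity)
    fun_prop
  set M := 1 + ((a * f + a * e + f) * d + (a * e + f + e) * ((f + 1) * (a + b))) / (b * d)
  have hM : 1 ≤ M := le_add_of_nonneg_right (by positivity)
  have hH_M : 0 < H M := by
    have hlarge :
        (a * f + a * e + f) * d + (a * e + f + e) * ((f + 1) * (a + b)) < b * d * M := by
      rw [← div_lt_iff₀' (by positivity)]
      exact lt_one_add _
    have hbound := add_mul_add_lt_mul_sq_of_sq_mul_eq ha.le hb.le hd he.le hf.le hM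
      (hg_sq M (by linarith)) hlarge
    have hgM := hg_pos M (by linarith)
    simp only [H]
    nlinarith [mul_nonneg (mul_nonneg hc hgM.le) (sq_nonneg M)]
  have hH_0 : H 0 < 0 := by
    have hg0 := hg_pos 0 le_rfl
    simp only [H]
    nlinarith [mul_pos ha hf, mul_pos he hg0]
  obtain ⟨t, ⟨ht0, -⟩, ht⟩ :=
    intermediate_value_Icc (by linarith) (hH_cont.mono Icc_subset_Ici_self) ⟨hH_0.le, hH_M.le⟩
  have ht_pos : 0 < t := ht0.lt_of_ne (by rintro rfl; exact hH_0.ne ht)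
  exact ⟨t, g t, ht_pos, hg_pos t ht0, hg_sq t ht0, sub_eq_zero.1 ht⟩

end Existence

/-- Lemma 10 (iii) of the paper: in the open first quadrant, the fixed points of
`F_{f,e,d,c,b,a} = F_f ∘ F_e ∘ F_d ∘ F_c ∘ F_b ∘ F_a` are exactly the critical points of
`V_{f,e,d,c,b,a}`, and both sets are described by the equations
`y²(e+dx) = (f+x)(a+bx)`, `x²(b+cy) = (a+y)(f+ey)`; moreover there is at least one fixed
point in the open first quadrant. -/
theorem lyness_six_composition_fixed_points
    (a b c d e f : ℝ)
    (ha : 0 < a) (hb : 0 < b) (hc : 0 < c) (hd : 0 < d) (he : 0 < e) (hf : 0 < f) :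
    (∀ x y : ℝ, 0 < x → 0 < y →
      (((lyness f ∘ lyness e ∘ lyness d ∘ lyness c ∘ lyness b ∘ lyness a) (x, y) = (x, y) ↔
          deriv (fun s => lynessV a b c d e f s y) x = 0 ∧
            deriv (fun s => lynessV a b c d e f x s) y = 0) ∧
        ((lyness f ∘ lyness e ∘ lyness d ∘ lyness c ∘ lyness b ∘ lyness a) (x, y) = (x, y) ↔
          y ^ 2 * (e + d * x) = (f + x) * (a + b * x) ∧
            x ^ 2 * (b + c * y) = (a + y) * (f + e * y)))) ∧
    (∃ p : ℝ × ℝ, 0 < p.1 ∧ 0 < p.2 ∧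
        (lyness f ∘ lyness e ∘ lyness d ∘ lyness c ∘ lyness b ∘ lyness a) p = p) := by
  have hfixed : ∀ x y : ℝ, 0 < x → 0 < y →
      ((lyness f ∘ lyness e ∘ lyness d ∘ lyness c ∘ lyness b ∘ lyness a) (x, y) = (x, y) ↔
        y ^ 2 * (e + d * x) = (f + x) * (a + b * x) ∧
          x ^ 2 * (b + c * y) = (a + y) * (f + e * y)) := fun x y hx hy ↦
    lyness_comp_six_eq_self_iff ha.le hb.le hc.le hd.le he.le hx hy
  refine ⟨fun x y hx hy ↦ ⟨?_, hfixed x y hx hy⟩, ?_⟩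
  · rw [hfixed x y hx hy, deriv_lynessV_fst_eq_zero_iff a b c d e f hx.ne' hy.ne',
      deriv_lynessV_snd_eq_zero_iff a b c d e f hx.ne' hy.ne', and_comm]
  · obtain ⟨x, y, hx, hy, h⟩ := exists_pos_sq_mul_eq_and_sq_mul_eq ha hb hc.le hd he hf
    exact ⟨(x, y), hx, hy, (hfixed x y hx hy).2 h⟩
end

section
/- Let a, c be positive real numbers and define the linear map φ(x,y) = (y/c, x/(ac)). Then φ conjugates the composition map F_{1/a, c, ac, a} = F_{1/a} ∘ F_c ∘ F_{ac} ∘ F_a to the Lyness map F_{1/(ac²)}: for every (x,y) ∈ Q⁺, F_{1/(ac²)}(φ(x,y)) = φ(F_{1/a, c, ac, a}(x,y)). -/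
/-! The four-fold composition collapses on `Q⁺` to the birational map
`(x, y) ↦ ((1 + c x) / y, x / a)`: the only non-trivial cancellation is
`c x y + a c x + a + y = (1 + c x) (a + y)` in the third map. Conjugating this map by `φ` is
then a one-line computation. -/

theorem lyness_mk (a x y : ℝ) : lyness a (x, y) = (y, (a + y) / x) := rfl

theorem lyness_comp_four_apply {a c x y : ℝ} (ha : 0 < a) (hc : 0 < c) (hx : 0 < x)
    (hy : 0 < y) :
    (lyness (1 / a) ∘ lyness c ∘ lyness (a * c) ∘ lyness a) (x, y) =
      ((1 + c * x) / y, x / a) := by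
  have hay : a + y ≠ 0 := by positivity
  have hsum : a * c * x + a + y ≠ 0 := by positivity
  have second : lyness (a * c) (lyness a (x, y)) =
      ((a + y) / x, (a * c * x + a + y) / (x * y)) := by
    rw [lyness_mk, lyness_mk, Prod.mk.injEq]
    refine ⟨rfl, ?_⟩
    field_simp
    ring
  have third : lyness c ((a + y) / x, (a * c * x + a + y) / (x * y)) =
      ((a * c * x + a + y) / (x * y), (1 + c * x) / y) := by
    rw [lyness_mk, Prod.mk.injEq]
    refine ⟨rfl, ?_⟩
    field_simp
    ring
  have fourth : lyness (1 / a) ((a * c * x + a + y) / (x * y), (1 + c * x) / y) =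
      ((1 + c * x) / y, x / a) := by
    rw [lyness_mk, Prod.mk.injEq]
    refine ⟨rfl, ?_⟩
    field_simp
    ring
  simp only [Function.comp_apply, second, third, fourth]

/-- Lemma 11 of the paper: the linear map `φ(x,y) = (y/c, x/(ac))` conjugates the
composition map `F_{1/a, c, ac, a} = F_{1/a} ∘ F_c ∘ F_{ac} ∘ F_a` to the Lyness map
`F_{1/(ac²)}` on the open first quadrant. -/
theorem lyness_four_composition_conjugate
    (a c : ℝ) (ha : 0 < a) (hc : 0 < c) :
    ∀ x y : ℝ, 0 < x → 0 < y →
      lyness (1 / (a * c ^ 2)) (y / c, x / (a * c)) =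
        (fun p : ℝ × ℝ => (p.2 / c, p.1 / (a * c)))
          ((lyness (1 / a) ∘ lyness c ∘ lyness (a * c) ∘ lyness a) (x, y)) := by
  intro x y hx hy
  rw [lyness_comp_four_apply ha hc hx hy, lyness_mk, Prod.mk.injEq]
  constructor <;> field_simp
end

section
/- For every positive real number c, the fifth iterate of the composition map F_{c², c, 1/c, 1/c²} = F_{c²} ∘ F_c ∘ F_{1/c} ∘ F_{1/c²} is the identity on Q⁺: for all (x,y) ∈ Q⁺, (F_{c², c, 1/c, 1/c²})⁵(x,y) = (x,y). Equivalently, the recurrence x_{n+2} = (a_n + x_{n+1})/x_n with the 4-periodic sequence of parameters 1/c², 1/c, c, c², 1/c², 1/c, ... is globally 20-periodic: x_{n+20} = x_n for all n and all positive initial conditions. -/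
open Function Set

theorem Set.EqOn.iterate_of_mapsTo {α : Type*} {f g : α → α} {s : Set α} (hfg : EqOn f g s)
    (hg : MapsTo g s s) (n : ℕ) : EqOn f^[n] g^[n] s := by
  induction n with
  | zero => exact fun _ _ => rfl
  | succ n ih =>
    intro x hx
    rw [iterate_succ_apply, iterate_succ_apply, hfg hx, ih (hg hx)]

theorem Function.Periodic.of_succ_eq_of_apply_eq {α : Type*} {f : ℕ → α → α} {s : ℕ → α}
    {p : ℕ} (hf : Periodic f p) (hs : ∀ n, s (n + 1) = f n (s n)) (hp : s p = s 0) :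
    Periodic s p := by
  intro n
  induction n with
  | zero => simpa using hp
  | succ n ih => rw [add_right_comm, hs, hs, hf n, ih]

def posQuadrant : Set (ℝ × ℝ) := {p | 0 < p.1 ∧ 0 < p.2}

theorem lyness_one_iterate_five {p : ℝ × ℝ} (hp : p ∈ posQuadrant) : (lyness 1)^[5] p = p := by
  obtain ⟨x, y⟩ := p
  obtain ⟨hx, hy⟩ := hp
  -- the orbit is `(x, y), (y, (1+y)/x), ((1+y)/x, (1+x+y)/(xy)), ((1+x+y)/(xy), (1+x)/y),`
  -- `((1+x)/y, x)`
  simp only [iterate_succ, iterate_zero, comp_apply, id_eq, lyness]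
  refine Prod.ext ?_ ?_ <;> dsimp only <;> field_simp <;> ring

noncomputable def lynessBlock (c : ℝ) (p : ℝ × ℝ) : ℝ × ℝ := ((c * p.1 + 1) / p.2, c ^ 2 * p.1)

theorem eqOn_lyness_comp_lynessBlock {c : ℝ} (hc : 0 < c) :
    EqOn (lyness (c ^ 2) ∘ lyness c ∘ lyness (1 / c) ∘ lyness (1 / c ^ 2)) (lynessBlock c)
      posQuadrant := by
  rintro ⟨x, y⟩ ⟨hx, hy⟩
  simp only [comp_apply, lyness, lynessBlock]
  refine Prod.ext ?_ ?_ <;> dsimp only <;> field_simp <;> ring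

theorem mapsTo_lynessBlock {c : ℝ} (hc : 0 < c) :
    MapsTo (lynessBlock c) posQuadrant posQuadrant := by
  rintro ⟨x, y⟩ ⟨hx, hy⟩
  exact ⟨show 0 < (c * x + 1) / y by positivity, show 0 < c ^ 2 * x by positivity⟩

theorem semiconj_lyness_one_lynessBlock {c : ℝ} (hc : c ≠ 0) :
    Semiconj (fun p => (p.2 / c, c * p.1)) (lyness 1) (lynessBlock c) := by
  rintro ⟨s, t⟩
  -- at `s = 0` both sides are `(0, c * t)` because `a / 0 = 0`, so no positivity is needed
  rcases eq_or_ne s 0 with rfl | hs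
  · simp only [lyness, lynessBlock, div_zero, zero_div, mul_zero, Prod.mk.injEq]
    exact ⟨trivial, by field_simp⟩
  simp only [lyness, lynessBlock, Prod.mk.injEq]
  constructor
  · field_simp
    ring
  · field_simp

theorem lynessBlock_iterate_five {c : ℝ} (hc : 0 < c) {p : ℝ × ℝ} (hp : p ∈ posQuadrant) :
    (lynessBlock c)^[5] p = p := by
  obtain ⟨x, y⟩ := p
  obtain ⟨hx, hy⟩ := hp
  have hq : ((y / c, c * x) : ℝ × ℝ) ∈ posQuadrant :=
    ⟨show 0 < y / c by positivity, show 0 < c * x by positivity⟩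
  have hrescale : ((c * x / c, c * (y / c)) : ℝ × ℝ) = (x, y) := by
    refine Prod.ext ?_ ?_ <;> dsimp only <;> field_simp
  rw [← hrescale, ← (semiconj_lyness_one_lynessBlock hc.ne').iterate_right 5 (y / c, c * x),
    lyness_one_iterate_five hq]

theorem lyness_comp_iterate_five {c : ℝ} (hc : 0 < c) {p : ℝ × ℝ} (hp : p ∈ posQuadrant) :
    (lyness (c ^ 2) ∘ lyness c ∘ lyness (1 / c) ∘ lyness (1 / c ^ 2))^[5] p = p := by
  rw [(eqOn_lyness_comp_lynessBlock hc).iterate_of_mapsTo (mapsTo_lynessBlock hc) 5 hp,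
    lynessBlock_iterate_five hc hp]

theorem lyness_pair_succ {A x : ℕ → ℝ} {n : ℕ} (hx : x (n + 2) = (A n + x (n + 1)) / x n) :
    (x (n + 1), x (n + 1 + 1)) = lyness (A n) (x n, x (n + 1)) := by
  rw [lyness, ← hx]

theorem lyness_recurrence_periodic_twenty {c : ℝ} (hc : 0 < c) {A x : ℕ → ℝ}
    (hA : Periodic A 4) (hA0 : A 0 = 1 / c ^ 2) (hA1 : A 1 = 1 / c) (hA2 : A 2 = c)
    (hA3 : A 3 = c ^ 2) (hx : ∀ n, x (n + 2) = (A n + x (n + 1)) / x n) (hx0 : 0 < x 0)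
    (hx1 : 0 < x 1) : Periodic x 20 := by
  set s : ℕ → ℝ × ℝ := fun n => (x n, x (n + 1))
  have hs : ∀ n, s (n + 1) = lyness (A n) (s n) := fun n => lyness_pair_succ (hx n)
  have hblock : ∀ k, s (4 * k) =
      (lyness (c ^ 2) ∘ lyness c ∘ lyness (1 / c) ∘ lyness (1 / c ^ 2))^[k] (s 0) := by
    intro k
    induction k with
    | zero => rfl
    | succ k ih =>
      have hAk : ∀ i, A (4 * k + i) = A i := fun i => by
        simpa [add_comm, mul_comm] using hA.nat_mul k i
      have hAk0 : A (4 * k) = A 0 := by simpa using hAk 0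
      rw [iterate_succ_apply', ← ih, mul_add, hs, hs, hs, hs, hAk 3, hAk 2, hAk 1, hAk0,
        hA0, hA1, hA2, hA3]
      rfl
  have hA20 : Periodic A 20 := by simpa using hA.nat_mul 5
  have hs20 : Periodic s 20 := (hA20.comp lyness).of_succ_eq_of_apply_eq hs <| by
    rw [show 20 = 4 * 5 from rfl, hblock, lyness_comp_iterate_five hc (p := s 0) ⟨hx0, hx1⟩]
  exact fun n => congrArg Prod.fst (hs20 n)

/-- Corollary 12 of the paper: the fifth iterate of `F_{c²,c,1/c,1/c²} = F_{c²} ∘ F_c ∘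
F_{1/c} ∘ F_{1/c²}` is the identity on the open first quadrant; equivalently, the Lyness
recurrence with the `4`-periodic sequence of parameters `1/c², 1/c, c, c², …` is globally
`20`-periodic. -/
theorem lyness_four_composition_globally_twenty_periodic
    (c : ℝ) (hc : 0 < c) :
    (∀ x y : ℝ, 0 < x → 0 < y →
      (lyness (c ^ 2) ∘ lyness c ∘ lyness (1 / c) ∘ lyness (1 / c ^ 2))^[5] (x, y) =
        (x, y)) ∧
    (∀ A : ℕ → ℝ, A 1 = 1 / c ^ 2 → A 2 = 1 / c → A 3 = c → A 4 = c ^ 2 →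
      (∀ n, 1 ≤ n → A (n + 4) = A n) →
      ∀ x : ℕ → ℝ, 0 < x 1 → 0 < x 2 →
        (∀ n, 1 ≤ n → x (n + 2) = (A n + x (n + 1)) / x n) →
        ∀ n, 1 ≤ n → x (n + 20) = x n) := by
  refine ⟨fun x y hx hy => lyness_comp_iterate_five hc ⟨hx, hy⟩, ?_⟩
  intro A hA1 hA2 hA3 hA4 hA x hx1 hx2 hx n hn
  obtain ⟨m, rfl⟩ := Nat.exists_eq_add_of_le' hn
  have hshift := lyness_recurrence_periodic_twenty hc (A := fun m => A (m + 1))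
    (x := fun m => x (m + 1)) (fun m => hA (m + 1) (by omega)) hA1 hA2 hA3 hA4
    (fun m => hx (m + 1) (by omega)) hx1 hx2 m
  simpa [add_right_comm] using hshift
end
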